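/- arXiv:1303.6675 — 6 statements merged into one kernel-verified Lean document; each statement's English description precedes it below -/
import Mathlib

section
/- Let σ₁, σ₂ be spectral functions and suppose c := sup_{0≤α<1} (∫_α¹ σ₂(u) du)/(∫_α¹ σ₁(u) du) < ∞. Then for every Y ∈ L_{σ₁}, ‖Y‖_{σ₂} ≤ c · ‖Y‖_{σ₁}, and hence L_{σ₁} ⊆ L_{σ₂}. -/
/-! Let `ν_σ` be the measure `σ(u) du` on `(0, 1)` and `q` the quantile function of `|Y|`.
The layer-cake formula gives `‖Y‖_σ = ∫₀^∞ ν_σ {u | t < q u} dt`. Since `q` is nondecreasing,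
each superlevel set `{q > t}` agrees with a tail interval `(α, 1)` up to a `ν_σ`-null set, and on
tail intervals `ν_{σ₂} ≤ c ν_{σ₁}` is exactly the hypothesis; integrating in `t` gives the claim. -/

open MeasureTheory ENNReal

/-- The (left-continuous) quantile function of X: F_X^{-1}(p) = inf{y : P(X ≤ y) ≥ p}. -/
noncomputable def quantile {Ω : Type*} [MeasurableSpace Ω] (μ : Measure Ω)
    (X : Ω → ℝ) (p : ℝ) : ℝ :=
  sInf {y : ℝ | p ≤ (μ {ω | X ω ≤ y}).toReal}

/-- The σ-norm ‖Y‖_σ = ∫₀¹ σ(u)·F_{|Y|}^{-1}(u) du, valued in [0,∞]. -/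
noncomputable def sigmaNorm {Ω : Type*} [MeasurableSpace Ω] (μ : Measure Ω)
    (σ : ℝ → ℝ) (Y : Ω → ℝ) : ℝ≥0∞ :=
  ∫⁻ u in Set.Ioo (0 : ℝ) 1, ENNReal.ofReal (σ u * quantile μ (fun ω => |Y ω|) u)

/-- The Average Value-at-Risk at level α. -/
noncomputable def avar {Ω : Type*} [MeasurableSpace Ω] (μ : Measure Ω)
    (X : Ω → ℝ) (α : ℝ) : ℝ :=
  (1 - α)⁻¹ * ∫ u in α..1, quantile μ X u

open Set

section Quantile

variable {Ω : Type*} [MeasurableSpace Ω] {μ : Measure Ω} {X : Ω → ℝ}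

lemma nonneg_of_le_measure_le (hX : 0 ≤ X) {p y : ℝ} (hp : 0 < p)
    (hy : p ≤ (μ {ω | X ω ≤ y}).toReal) : 0 ≤ y := by
  by_contra! hy0
  have hempty : {ω | X ω ≤ y} = ∅ :=
    eq_empty_of_forall_notMem fun ω hω => (hy0.trans_le (hX ω)).not_ge hω
  rw [hempty, measure_empty, ENNReal.toReal_zero] at hy
  exact hp.not_ge hy

lemma quantile_nonneg (hX : 0 ≤ X) {p : ℝ} (hp : 0 < p) : 0 ≤ quantile μ X p :=
  Real.sInf_nonneg fun _ hy => nonneg_of_le_measure_le hX hp hy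

lemma exists_le_measure_le [IsProbabilityMeasure μ] (X : Ω → ℝ) {p : ℝ} (hp : p < 1) :
    ∃ y, p ≤ (μ {ω | X ω ≤ y}).toReal := by
  have hmono : Monotone fun n : ℕ => {ω | X ω ≤ n} :=
    fun _ _ hmn => ofPred_subset_ofPred.mpr fun _ hω => hω.trans (Nat.cast_le.mpr hmn)
  have hunion : ⋃ n : ℕ, {ω | X ω ≤ n} = univ :=
    eq_univ_of_forall fun ω => mem_iUnion.mpr (exists_nat_ge (X ω))
  have htendsto := tendsto_measure_iUnion_atTop (μ := μ) hmono
  rw [hunion, measure_univ] at htendsto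
  obtain ⟨n, hn⟩ := (htendsto.eventually (eventually_gt_nhds (ofReal_lt_one.mpr hp))).exists
  exact ⟨n, (ofReal_le_iff_le_toReal (measure_ne_top μ _)).mp hn.le⟩

lemma quantile_monotoneOn [IsProbabilityMeasure μ] (hX : 0 ≤ X) :
    MonotoneOn (quantile μ X) (Ioo 0 1) := fun _ hp _ hp' hpp' =>
  csInf_le_csInf ⟨0, fun _ hy => nonneg_of_le_measure_le hX hp.1 hy⟩
    (exists_le_measure_le X hp'.2) fun _ hy => hpp'.trans hy

end Quantile

noncomputable def spectralMeasure (σ : ℝ → ℝ) : Measure ℝ :=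
  (volume.restrict (Ioo 0 1)).withDensity fun u => ENNReal.ofReal (σ u)

section SpectralMeasure

variable {σ : ℝ → ℝ}

instance : NullSingletonClass (spectralMeasure σ) := by
  unfold spectralMeasure; infer_instance

lemma spectralMeasure_compl_Ioo : spectralMeasure σ (Ioo 0 1)ᶜ = 0 :=
  withDensity_absolutelyContinuous _ _ (Measure.restrict_apply_self _ _ ▸ by simp)

lemma spectralMeasure_Ioo (hσ0 : ∀ u ∈ Icc 0 1, 0 ≤ σ u) (hσm : MonotoneOn σ (Icc 0 1))
    {α : ℝ} (hα : α ∈ Icc 0 1) :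
    spectralMeasure σ (Ioo α 1) = ENNReal.ofReal (∫ u in α..1, σ u) := by
  have hsub : Icc α 1 ⊆ Icc 0 1 := Icc_subset_Icc_left hα.1
  have hint : IntegrableOn σ (Ioc α 1) :=
    (MonotoneOn.intervalIntegrable (by rw [uIcc_of_le hα.2]; exact hσm.mono hsub)).1
  have hnonneg : 0 ≤ᵐ[volume.restrict (Ioc α 1)] σ :=
    (ae_restrict_iff' measurableSet_Ioc).mpr <| ae_of_all _ fun u hu =>
      hσ0 u (hsub (Ioc_subset_Icc_self hu))
  rw [spectralMeasure, withDensity_apply _ measurableSet_Ioo,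
    Measure.restrict_restrict measurableSet_Ioo, inter_eq_left.mpr (Ioo_subset_Ioo_left hα.1),
    setLIntegral_congr Ioo_ae_eq_Ioc, intervalIntegral.integral_of_le hα.2,
    ofReal_integral_eq_lintegral_ofReal hint hnonneg]

end SpectralMeasure

lemma sigmaNorm_eq_lintegral_measure_lt {Ω : Type*} [MeasurableSpace Ω] (μ : Measure Ω)
    [IsProbabilityMeasure μ] {σ : ℝ → ℝ} (hσ : AEMeasurable σ (volume.restrict (Ioo 0 1)))
    (Y : Ω → ℝ) :
    sigmaNorm μ σ Y = ∫⁻ t in Ioi 0,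
      spectralMeasure σ {u | t < quantile μ (fun ω => |Y ω|) u} := by
  set q := quantile μ fun ω => |Y ω|
  have hq_nonneg : ∀ u ∈ Ioo (0 : ℝ) 1, 0 ≤ q u := fun u hu =>
    quantile_nonneg (fun ω => abs_nonneg (Y ω)) hu.1
  have hq : AEMeasurable q (volume.restrict (Ioo 0 1)) :=
    aemeasurable_restrict_of_monotoneOn measurableSet_Ioo
      (quantile_monotoneOn fun ω => abs_nonneg (Y ω))
  have hac := withDensity_absolutelyContinuous (volume.restrict (Ioo (0 : ℝ) 1))
    fun u => ENNReal.ofReal (σ u)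
  have hq_ae_nonneg : 0 ≤ᵐ[spectralMeasure σ] q :=
    hac.ae_le <| (ae_restrict_iff' measurableSet_Ioo).mpr (ae_of_all _ hq_nonneg)
  rw [← lintegral_eq_lintegral_meas_lt _ hq_ae_nonneg (hq.mono' hac), spectralMeasure,
    lintegral_withDensity_eq_lintegral_mul₀ hσ.ennreal_ofReal hq.ennreal_ofReal, sigmaNorm]
  exact setLIntegral_congr_fun measurableSet_Ioo fun u hu => ofReal_mul' (hq_nonneg u hu)

lemma exists_Ioo_subset_superlevel_subset_Icc {q : ℝ → ℝ} (hq : MonotoneOn q (Ioo 0 1))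
    (t : ℝ) : ∃ α ∈ Icc (0 : ℝ) 1,
      Ioo α 1 ⊆ {u | t < q u} ∩ Ioo 0 1 ∧ {u | t < q u} ∩ Ioo 0 1 ⊆ Icc α 1 := by
  set B := {u | t < q u} ∩ Ioo 0 1
  rcases B.eq_empty_or_nonempty with hB | ⟨b₀, hb₀⟩
  · exact ⟨1, right_mem_Icc.mpr zero_le_one, by simp, hB ▸ empty_subset _⟩
  have hbdd : BddBelow B := ⟨0, fun b hb => hb.2.1.le⟩
  refine ⟨sInf B, ⟨le_csInf ⟨b₀, hb₀⟩ fun b hb => hb.2.1.le, (csInf_le hbdd hb₀).trans hb₀.2.2.le⟩,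
    fun u hu => ?_, fun b hb => ⟨csInf_le hbdd hb, hb.2.2.le⟩⟩
  obtain ⟨b, hb, hbu⟩ := exists_lt_of_csInf_lt ⟨b₀, hb₀⟩ hu.1
  have hu' : u ∈ Ioo (0 : ℝ) 1 := ⟨hb.2.1.trans hbu, hu.2⟩
  exact ⟨hb.1.trans_le (hq hb.2 hu' hbu.le), hu'⟩

lemma measure_superlevel_le_of_tail {ν₁ ν₂ : Measure ℝ} [NullSingletonClass ν₂]
    (hν₂ : ν₂ (Ioo 0 1)ᶜ = 0) {C : ℝ≥0∞}
    (htail : ∀ α ∈ Ico (0 : ℝ) 1, ν₂ (Ioo α 1) ≤ C * ν₁ (Ioo α 1))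
    {q : ℝ → ℝ} (hq : MonotoneOn q (Ioo 0 1)) (t : ℝ) :
    ν₂ {u | t < q u} ≤ C * ν₁ {u | t < q u} := by
  obtain ⟨α, hα, hlower, hupper⟩ := exists_Ioo_subset_superlevel_subset_Icc hq t
  have hIoo : ν₂ (Ioo α 1) ≤ C * ν₁ (Ioo α 1) := by
    rcases hα.2.lt_or_eq with hα1 | rfl
    · exact htail α ⟨hα.1, hα1⟩
    · simp
  calc ν₂ {u | t < q u} = ν₂ ({u | t < q u} ∩ Ioo 0 1) := (measure_inter_conull hν₂).symm
    _ ≤ ν₂ (Icc α 1) := measure_mono hupper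
    _ = ν₂ (Ioo α 1) := measure_congr Ioo_ae_eq_Icc.symm
    _ ≤ C * ν₁ (Ioo α 1) := hIoo
    _ ≤ C * ν₁ {u | t < q u} := by gcongr; exact fun u hu => (hlower hu).1

theorem stmt8_general {Ω : Type*} [MeasurableSpace Ω] (μ : Measure Ω) [IsProbabilityMeasure μ]
    (σ₁ σ₂ : ℝ → ℝ)
    (hσ₁0 : ∀ u ∈ Set.Icc (0 : ℝ) 1, 0 ≤ σ₁ u) (hσ₁m : MonotoneOn σ₁ (Set.Icc (0 : ℝ) 1))
    (hσ₂0 : ∀ u ∈ Set.Icc (0 : ℝ) 1, 0 ≤ σ₂ u) (hσ₂m : MonotoneOn σ₂ (Set.Icc (0 : ℝ) 1))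
    (c : ℝ)
    (hc : ∀ α ∈ Set.Ico (0 : ℝ) 1, (∫ u in α..1, σ₂ u) ≤ c * ∫ u in α..1, σ₁ u)
    (Y : Ω → ℝ) :
    sigmaNorm μ σ₂ Y ≤ ENNReal.ofReal c * sigmaNorm μ σ₁ Y := by
  have htail : ∀ α ∈ Ico (0 : ℝ) 1, spectralMeasure σ₂ (Ioo α 1) ≤
      ENNReal.ofReal c * spectralMeasure σ₁ (Ioo α 1) := fun α hα => by
    rw [spectralMeasure_Ioo hσ₂0 hσ₂m (Ico_subset_Icc_self hα),
      spectralMeasure_Ioo hσ₁0 hσ₁m (Ico_subset_Icc_self hα), ← ofReal_mul'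
        (intervalIntegral.integral_nonneg hα.2.le fun u hu => hσ₁0 u ⟨hα.1.trans hu.1, hu.2⟩)]
    exact ofReal_le_ofReal (hc α hα)
  have hmeas (σ : ℝ → ℝ) (hσm : MonotoneOn σ (Icc 0 1)) :
      AEMeasurable σ (volume.restrict (Ioo 0 1)) :=
    aemeasurable_restrict_of_monotoneOn measurableSet_Ioo (hσm.mono Ioo_subset_Icc_self)
  rw [sigmaNorm_eq_lintegral_measure_lt μ (hmeas σ₂ hσ₂m),
    sigmaNorm_eq_lintegral_measure_lt μ (hmeas σ₁ hσ₁m), ← lintegral_const_mul' _ _ ofReal_ne_top]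
  exact lintegral_mono fun t => measure_superlevel_le_of_tail spectralMeasure_compl_Ioo htail
    (quantile_monotoneOn fun ω => abs_nonneg (Y ω)) t

/-- if c bounds the ratios of tail integrals of the spectral functions σ₂, σ₁,
then ‖Y‖_{σ₂} ≤ c‖Y‖_{σ₁} for every Y, hence L_{σ₁} ⊆ L_{σ₂}. -/
theorem stmt8 {Ω : Type*} [MeasurableSpace Ω] (μ : Measure Ω) [IsProbabilityMeasure μ]
    (σ₁ σ₂ : ℝ → ℝ)
    (hσ₁0 : ∀ u ∈ Set.Icc (0 : ℝ) 1, 0 ≤ σ₁ u) (hσ₁m : MonotoneOn σ₁ (Set.Icc (0 : ℝ) 1))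
    (hσ₁1 : (∫ u in (0 : ℝ)..1, σ₁ u) = 1)
    (hσ₂0 : ∀ u ∈ Set.Icc (0 : ℝ) 1, 0 ≤ σ₂ u) (hσ₂m : MonotoneOn σ₂ (Set.Icc (0 : ℝ) 1))
    (hσ₂1 : (∫ u in (0 : ℝ)..1, σ₂ u) = 1)
    (c : ℝ)
    (hc : ∀ α ∈ Set.Ico (0 : ℝ) 1, (∫ u in α..1, σ₂ u) ≤ c * ∫ u in α..1, σ₁ u)
    (Y : Ω → ℝ) (hYm : Measurable Y) (hY : sigmaNorm μ σ₁ Y < ⊤) :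
    sigmaNorm μ σ₂ Y ≤ ENNReal.ofReal c * sigmaNorm μ σ₁ Y :=
  stmt8_general μ σ₁ σ₂ hσ₁0 hσ₁m hσ₂0 hσ₂m c hc Y
end

section
/- Let σ ∈ L^q([0,1]) be a spectral function with 1 < q < ∞ and conjugate exponent p. Then there exists a random variable Y with ‖Y‖_σ := ∫₀¹ σ(u) F_{|Y|}^{-1}(u) du < ∞ but E|Y|^p = ∞; that is, the inclusion L^p ⊆ L_σ is strict. -/
/-!
Take `Y = σ^(q-1) · T^(-1/p)` with `T(u) = ∫_u^1 σ^q`. As `Y` is nondecreasing on `[0, 1)`, the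
quantile of `|Y|` at `u` is at most `Y(u)`, so `‖Y‖_σ ≤ ∫₀¹ σ^q T^(-1/p)`, while
`|Y|^p = σ^q T^(-1)`. The tail `T` transports the measure `σ(u)^q du` to Lebesgue measure on
`(0, T(0))`, so these two integrals are `∫₀^T(0) s^(-1/p) ds < ∞` and `∫₀^T(0) s^(-1) ds = ∞`.
Finally `T > 0` on `[0, 1)`: a monotone `σ ≥ 0` vanishing near `1` vanishes on `[0, 1)`,
contradicting `∫₀¹ σ = 1`.
-/

open MeasureTheory ENNReal

open Set

theorem ae_eq_Ioo_of_Ioo_subset_of_subset_Icc {α : Type*} [MeasurableSpace α] [PartialOrder α]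
    {μ : Measure α} [NullSingletonClass μ] {s : Set α} {x y : α}
    (h₁ : Ioo x y ⊆ s) (h₂ : s ⊆ Icc x y) : s =ᵐ[μ] Ioo x y :=
  (h₂.eventuallyLE.trans Ioo_ae_eq_Icc.symm.le).antisymm h₁.eventuallyLE

section Quantile

variable {Ω : Type*} [MeasurableSpace Ω]

theorem quantile_le_of_le_measure {μ : Measure Ω} {X : Ω → ℝ} {p y : ℝ} (hX : 0 ≤ X)
    (hp : 0 < p) (hy : p ≤ (μ {ω | X ω ≤ y}).toReal) : quantile μ X p ≤ y := by
  refine csInf_le ⟨0, fun z hz => ?_⟩ hy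
  by_contra! hz0
  have hempty : {ω | X ω ≤ z} = ∅ :=
    eq_empty_of_forall_notMem fun ω hω => (hz0.trans_le (hX ω)).not_ge hω
  have hz' : p ≤ (μ {ω | X ω ≤ z}).toReal := hz
  rw [hempty, measure_empty, toReal_zero] at hz'
  linarith

theorem quantile_abs_le_of_monotoneOn {Y : ℝ → ℝ} {u : ℝ} (hu : u ∈ Ioo 0 1)
    (hY : MonotoneOn Y (Icc 0 u)) (hY0 : 0 ≤ Y 0) :
    quantile (volume.restrict (Icc 0 1)) (fun ω => |Y ω|) u ≤ Y u := by
  have hu0 : (0 : ℝ) ∈ Icc 0 u := ⟨le_rfl, hu.1.le⟩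
  have hsub : Icc 0 u ⊆ {ω | |Y ω| ≤ Y u} ∩ Icc 0 1 := fun t ht =>
    ⟨show |Y t| ≤ Y u by
        rw [abs_of_nonneg (hY0.trans (hY hu0 ht ht.1))]
        exact hY ht ⟨hu.1.le, le_rfl⟩ ht.2,
      ht.1, ht.2.trans hu.2.le⟩
  refine quantile_le_of_le_measure (fun _ => abs_nonneg _) hu.1 ?_
  rw [Measure.restrict_apply' measurableSet_Icc, ← ENNReal.ofReal_le_iff_le_toReal
    (measure_ne_top_of_subset inter_subset_right (by simp [Real.volume_Icc]))]
  simpa [Real.volume_Icc] using measure_mono (μ := volume) hsub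

end Quantile

section TailIntegral

variable {f : ℝ → ℝ} {a b : ℝ}

theorem antitone_integral_left (hf : Integrable f) (hf0 : 0 ≤ f) :
    Antitone fun u => ∫ t in u..b, f t := by
  intro u v huv
  have hsplit := intervalIntegral.integral_interval_sub_left
    (hf.intervalIntegrable (a := u) (b := b)) (hf.intervalIntegrable (a := u) (b := v))
  have hnonneg : 0 ≤ ∫ t in u..v, f t := intervalIntegral.integral_nonneg huv fun t _ => hf0 t
  dsimp only
  linarith

theorem continuous_integral_left (hf : Integrable f) : Continuous fun u => ∫ t in u..b, f t :=
  (hf.continuous_primitive b).neg.congr fun u => (intervalIntegral.integral_symm b u).symm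

theorem ofReal_integral_eq_setLIntegral_Ioo (hf : Integrable f) (hf0 : 0 ≤ f) (hab : a ≤ b) :
    ENNReal.ofReal (∫ t in a..b, f t) = ∫⁻ t in Ioo a b, ENNReal.ofReal (f t) := by
  rw [intervalIntegral.integral_of_le hab, restrict_Ioo_eq_restrict_Ioc,
    ofReal_integral_eq_lintegral_ofReal hf.integrableOn (.of_forall hf0)]

theorem exists_integral_left_eq_min (hf : Integrable f) (hf0 : 0 ≤ f) (hab : a ≤ b)
    {c : ℝ} (hc : 0 ≤ c) :
    ∃ w ∈ Icc a b, (∫ t in w..b, f t) = min c (∫ t in a..b, f t) ∧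
      ∀ u ∈ Icc a b, (∫ t in u..b, f t) ≤ c ↔ w ≤ u := by
  set T : ℝ → ℝ := fun u => ∫ t in u..b, f t
  have hT : Antitone T := antitone_integral_left hf hf0
  have hTc : Continuous T := continuous_integral_left hf
  rcases le_total (T a) c with hac | hca
  · exact ⟨a, left_mem_Icc.2 hab, (min_eq_right hac).symm,
      fun u hu => ⟨fun _ => hu.1, fun _ => (hT hu.1).trans hac⟩⟩
  set K := Icc a b ∩ {u | T u ≤ c}
  have hKbdd : BddBelow K := ⟨a, fun u hu => hu.1.1⟩
  obtain ⟨w₀, hw₀, hTw₀⟩ : c ∈ T '' Icc a b :=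
    intermediate_value_Icc' hab hTc.continuousOn ⟨by simpa [T] using hc, hca⟩
  have hwK : sInf K ∈ K :=
    (isClosed_Icc.inter (isClosed_le hTc continuous_const)).csInf_mem
      ⟨w₀, hw₀, hTw₀.le⟩ hKbdd
  refine ⟨sInf K, hwK.1, ?_, fun u hu => ⟨fun h => csInf_le hKbdd ⟨hu, h⟩,
    fun h => (hT h).trans hwK.2⟩⟩
  rw [min_eq_left hca]
  exact le_antisymm hwK.2 (hTw₀ ▸ hT (csInf_le hKbdd ⟨hw₀, hTw₀.le⟩))

theorem map_integral_left_withDensity (hf : Integrable f) (hf0 : 0 ≤ f) (hab : a ≤ b) :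
    ((volume.restrict (Ioo a b)).withDensity fun u => ENNReal.ofReal (f u)).map
      (fun u => ∫ t in u..b, f t) = volume.restrict (Ioo 0 (∫ t in a..b, f t)) := by
  set T : ℝ → ℝ := fun u => ∫ t in u..b, f t
  set M := ∫ t in a..b, f t
  have hTm : Measurable T := (continuous_integral_left hf).measurable
  have : IsFiniteMeasure
      ((volume.restrict (Ioo a b)).withDensity fun u => ENNReal.ofReal (f u)) :=
    isFiniteMeasure_withDensity_ofReal hf.restrict.hasFiniteIntegral
  refine Measure.ext_of_Iic _ _ fun c => ?_
  rw [Measure.map_apply hTm measurableSet_Iic, withDensity_apply _ (hTm measurableSet_Iic),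
    Measure.restrict_restrict (hTm measurableSet_Iic), Measure.restrict_apply measurableSet_Iic]
  rcases lt_or_ge c 0 with hc | hc
  · have hT0 : ∀ u ≤ b, 0 ≤ T u := fun u hu => by
      simpa [T] using antitone_integral_left hf hf0 (b := b) hu
    have hpre : T ⁻¹' Iic c ∩ Ioo a b = ∅ :=
      eq_empty_of_forall_notMem fun u hu => (hc.trans_le (hT0 u hu.2.2.le)).not_ge hu.1
    have himage : Iic c ∩ Ioo 0 M = ∅ :=
      eq_empty_of_forall_notMem fun s hs => (hc.trans hs.2.1).not_ge hs.1
    simp [hpre, himage]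
  obtain ⟨w, hw, hTw, hle_iff⟩ := exists_integral_left_eq_min hf hf0 hab hc
  have hpre : (T ⁻¹' Iic c ∩ Ioo a b : Set ℝ) =ᵐ[volume] Ioo w b :=
    ae_eq_Ioo_of_Ioo_subset_of_subset_Icc
      (fun u hu => ⟨(hle_iff u ⟨hw.1.trans hu.1.le, hu.2.le⟩).2 hu.1.le,
        hw.1.trans_lt hu.1, hu.2⟩)
      (fun u hu => ⟨(hle_iff u ⟨hu.2.1.le, hu.2.2.le⟩).1 hu.1, hu.2.2.le⟩)
  have himage : (Iic c ∩ Ioo 0 M : Set ℝ) =ᵐ[volume] Ioo 0 (min c M) :=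
    ae_eq_Ioo_of_Ioo_subset_of_subset_Icc
      (fun s hs => ⟨hs.2.le.trans (min_le_left _ _), hs.1, hs.2.trans_le (min_le_right _ _)⟩)
      (fun s hs => ⟨hs.2.1.le, le_min hs.1 hs.2.2.le⟩)
  rw [setLIntegral_congr hpre, measure_congr himage, Real.volume_Ioo, sub_zero, ← hTw,
    ofReal_integral_eq_setLIntegral_Ioo hf hf0 hw.2]

theorem lintegral_comp_integral_left (hf : Integrable f) (hf0 : 0 ≤ f) (hab : a ≤ b)
    {g : ℝ → ℝ≥0∞} (hg : Measurable g) :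
    ∫⁻ u in Ioo a b, ENNReal.ofReal (f u) * g (∫ t in u..b, f t) =
      ∫⁻ s in Ioo 0 (∫ t in a..b, f t), g s := by
  have hTm : Measurable fun u => ∫ t in u..b, f t := (continuous_integral_left hf).measurable
  rw [← map_integral_left_withDensity hf hf0 hab, lintegral_map hg hTm,
    lintegral_withDensity_eq_lintegral_mul₀ (g := fun u => g (∫ t in u..b, f t))
      hf.aemeasurable.ennreal_ofReal.restrict (hg.comp hTm).aemeasurable]
  rfl

end TailIntegral

theorem setLIntegral_rpow_Ioo_lt_top_iff {r M : ℝ} (hM : 0 < M) :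
    ∫⁻ s in Ioo 0 M, ENNReal.ofReal (s ^ r) < ⊤ ↔ -1 < r := by
  rw [← intervalIntegral.integrableOn_Ioo_rpow_iff hM, lt_top_iff_ne_top, IntegrableOn]
  exact lintegral_ofReal_ne_top_iff_integrable (measurable_id.pow_const r).aestronglyMeasurable
    (ae_restrict_of_forall_mem measurableSet_Ioo fun s hs => Real.rpow_nonneg hs.1.le r)

theorem exists_pos_of_monotoneOn_of_integral_ne_zero {σ : ℝ → ℝ}
    (hσ0 : ∀ u ∈ Icc (0 : ℝ) 1, 0 ≤ σ u) (hσm : MonotoneOn σ (Icc 0 1))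
    (hσ : ∫ u in (0 : ℝ)..1, σ u ≠ 0) {u : ℝ} (hu : u ∈ Ico 0 1) :
    ∃ v ∈ Ioo u 1, 0 < σ v := by
  by_contra! h
  refine hσ ?_
  rw [intervalIntegral.integral_of_le zero_le_one, integral_Ioc_eq_integral_Ioo]
  refine setIntegral_eq_zero_of_forall_eq_zero fun x hx =>
    le_antisymm ?_ (hσ0 x (Ioo_subset_Icc_self hx))
  obtain ⟨v, hv, hv1⟩ := exists_between (max_lt hu.2 hx.2)
  have hxv : x ≤ v := (le_max_right _ _).trans hv.le
  exact (hσm (Ioo_subset_Icc_self hx) ⟨hx.1.le.trans hxv, hv1.le⟩ hxv).trans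
    (h v ⟨(le_max_left _ _).trans_lt hv, hv1⟩)

section SpectralWitness

variable {σ : ℝ → ℝ} {p q : ℝ}

noncomputable def spectralDensity (σ : ℝ → ℝ) (q : ℝ) : ℝ → ℝ :=
  (Icc 0 1).indicator fun u => σ u ^ q

noncomputable def spectralTail (σ : ℝ → ℝ) (q u : ℝ) : ℝ :=
  ∫ t in u..1, spectralDensity σ q t

noncomputable def spectralWitness (σ : ℝ → ℝ) (p q u : ℝ) : ℝ :=
  σ u ^ (q - 1) * spectralTail σ q u ^ (-p⁻¹)

theorem spectralDensity_of_mem {u : ℝ} (hu : u ∈ Icc (0 : ℝ) 1) :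
    spectralDensity σ q u = σ u ^ q :=
  indicator_of_mem hu _

theorem spectralDensity_nonneg (hσ0 : ∀ u ∈ Icc (0 : ℝ) 1, 0 ≤ σ u) :
    0 ≤ spectralDensity σ q :=
  indicator_nonneg fun u hu => Real.rpow_nonneg (hσ0 u hu) q

theorem integrable_spectralDensity (hσ0 : ∀ u ∈ Icc (0 : ℝ) 1, 0 ≤ σ u) (hq : 0 < q)
    (hσq : MemLp σ (ENNReal.ofReal q) (volume.restrict (Ioo 0 1))) :
    Integrable (spectralDensity σ q) := by
  have h : IntegrableOn (fun u => |σ u| ^ q) (Ioo 0 1) := by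
    simpa [IntegrableOn, toReal_ofReal hq.le] using
      hσq.integrable_norm_rpow (by simpa using hq) ofReal_ne_top
  refine IntegrableOn.integrable_indicator ?_ measurableSet_Icc
  rw [integrableOn_Icc_iff_integrableOn_Ioo]
  exact h.congr_fun
    (fun u hu => by dsimp only; rw [abs_of_nonneg (hσ0 u (Ioo_subset_Icc_self hu))])
    measurableSet_Ioo

theorem spectralTail_nonneg (hσ0 : ∀ u ∈ Icc (0 : ℝ) 1, 0 ≤ σ u)
    (hf : Integrable (spectralDensity σ q)) {u : ℝ} (hu : u ≤ 1) : 0 ≤ spectralTail σ q u := by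
  simpa [spectralTail] using antitone_integral_left hf (spectralDensity_nonneg hσ0) (b := 1) hu

theorem spectralTail_pos (hσ0 : ∀ u ∈ Icc (0 : ℝ) 1, 0 ≤ σ u) (hσm : MonotoneOn σ (Icc 0 1))
    (hσ : ∫ u in (0 : ℝ)..1, σ u ≠ 0) (hf : Integrable (spectralDensity σ q)) {u : ℝ}
    (hu : u ∈ Ico (0 : ℝ) 1) : 0 < spectralTail σ q u := by
  obtain ⟨v, hv, hσv⟩ := exists_pos_of_monotoneOn_of_integral_ne_zero hσ0 hσm hσ hu
  have hv01 : v ∈ Icc (0 : ℝ) 1 := ⟨hu.1.trans hv.1.le, hv.2.le⟩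
  refine lt_of_lt_of_le ?_ (antitone_integral_left hf (spectralDensity_nonneg hσ0) hv.1.le)
  refine intervalIntegral.intervalIntegral_pos_of_pos_on hf.intervalIntegrable
    (fun t ht => ?_) hv.2
  have ht01 : t ∈ Icc (0 : ℝ) 1 := ⟨hv01.1.trans ht.1.le, ht.2.le⟩
  rw [spectralDensity_of_mem ht01]
  exact Real.rpow_pos_of_pos (hσv.trans_le (hσm hv01 ht01 ht.1.le)) q

theorem spectralWitness_nonneg (hσ0 : ∀ u ∈ Icc (0 : ℝ) 1, 0 ≤ σ u)
    (hf : Integrable (spectralDensity σ q)) {u : ℝ} (hu : u ∈ Icc (0 : ℝ) 1) :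
    0 ≤ spectralWitness σ p q u :=
  mul_nonneg (Real.rpow_nonneg (hσ0 u hu) _)
    (Real.rpow_nonneg (spectralTail_nonneg hσ0 hf hu.2) _)

theorem monotoneOn_spectralWitness (hσ0 : ∀ u ∈ Icc (0 : ℝ) 1, 0 ≤ σ u)
    (hσm : MonotoneOn σ (Icc 0 1)) (hσ : ∫ u in (0 : ℝ)..1, σ u ≠ 0)
    (hf : Integrable (spectralDensity σ q)) (hqp : q.HolderConjugate p) :
    MonotoneOn (spectralWitness σ p q) (Ico 0 1) := fun s hs t ht hst =>
  mul_le_mul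
    (Real.rpow_le_rpow (hσ0 s (Ico_subset_Icc_self hs))
      (hσm (Ico_subset_Icc_self hs) (Ico_subset_Icc_self ht) hst) hqp.sub_one_pos.le)
    (Real.rpow_le_rpow_of_nonpos (spectralTail_pos hσ0 hσm hσ hf ht)
      (antitone_integral_left hf (spectralDensity_nonneg hσ0) hst)
      (neg_nonpos.2 hqp.symm.inv_nonneg))
    (Real.rpow_nonneg (spectralTail_nonneg hσ0 hf (hst.trans ht.2.le)) _)
    (Real.rpow_nonneg (hσ0 t (Ico_subset_Icc_self ht)) _)

theorem mul_spectralWitness (hσ0 : ∀ u ∈ Icc (0 : ℝ) 1, 0 ≤ σ u) (hqp : q.HolderConjugate p)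
    {u : ℝ} (hu : u ∈ Icc (0 : ℝ) 1) :
    σ u * spectralWitness σ p q u = spectralDensity σ q u * spectralTail σ q u ^ (-p⁻¹) := by
  have hσq : σ u ^ q = σ u ^ (q - 1) * σ u := by
    simpa using Real.rpow_add_one' (hσ0 u hu) (y := q - 1) (by simpa using hqp.ne_zero)
  rw [spectralWitness, spectralDensity_of_mem hu, hσq]
  ring

theorem abs_spectralWitness_rpow (hσ0 : ∀ u ∈ Icc (0 : ℝ) 1, 0 ≤ σ u)
    (hf : Integrable (spectralDensity σ q)) (hqp : q.HolderConjugate p) {u : ℝ}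
    (hu : u ∈ Icc (0 : ℝ) 1) :
    |spectralWitness σ p q u| ^ p = spectralDensity σ q u * spectralTail σ q u ^ (-1 : ℝ) := by
  have hT := spectralTail_nonneg hσ0 hf hu.2
  rw [abs_of_nonneg (spectralWitness_nonneg hσ0 hf hu), spectralWitness,
    Real.mul_rpow (Real.rpow_nonneg (hσ0 u hu) _) (Real.rpow_nonneg hT _),
    ← Real.rpow_mul (hσ0 u hu), ← Real.rpow_mul hT, hqp.sub_one_mul_conj, neg_mul,
    inv_mul_cancel₀ hqp.symm.ne_zero, spectralDensity_of_mem hu]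

theorem sigmaNorm_spectralWitness_lt_top (hσ0 : ∀ u ∈ Icc (0 : ℝ) 1, 0 ≤ σ u)
    (hσm : MonotoneOn σ (Icc 0 1)) (hσ : ∫ u in (0 : ℝ)..1, σ u ≠ 0)
    (hf : Integrable (spectralDensity σ q)) (hqp : q.HolderConjugate p) :
    sigmaNorm (volume.restrict (Icc 0 1)) σ (spectralWitness σ p q) < ⊤ :=
  calc sigmaNorm (volume.restrict (Icc 0 1)) σ (spectralWitness σ p q)
      ≤ ∫⁻ u in Ioo 0 1, ENNReal.ofReal (spectralDensity σ q u) *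
          ENNReal.ofReal (spectralTail σ q u ^ (-p⁻¹)) := by
        refine setLIntegral_mono' measurableSet_Ioo fun u hu => ?_
        have hu01 := Ioo_subset_Icc_self hu
        rw [← ofReal_mul (spectralDensity_nonneg hσ0 u), ← mul_spectralWitness hσ0 hqp hu01]
        refine ofReal_le_ofReal (mul_le_mul_of_nonneg_left ?_ (hσ0 u hu01))
        exact quantile_abs_le_of_monotoneOn hu
          ((monotoneOn_spectralWitness hσ0 hσm hσ hf hqp).mono (Icc_subset_Ico_right hu.2))
          (spectralWitness_nonneg hσ0 hf ⟨le_rfl, zero_le_one⟩)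
    _ = ∫⁻ s in Ioo 0 (spectralTail σ q 0), ENNReal.ofReal (s ^ (-p⁻¹)) :=
        lintegral_comp_integral_left hf (spectralDensity_nonneg hσ0) zero_le_one
          (measurable_id.pow_const _).ennreal_ofReal
    _ < ⊤ := (setLIntegral_rpow_Ioo_lt_top_iff
        (spectralTail_pos hσ0 hσm hσ hf ⟨le_rfl, one_pos⟩)).2
          (neg_lt_neg (inv_lt_one_of_one_lt₀ hqp.symm.lt))

theorem setLIntegral_abs_spectralWitness_rpow_eq_top (hσ0 : ∀ u ∈ Icc (0 : ℝ) 1, 0 ≤ σ u)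
    (hσm : MonotoneOn σ (Icc 0 1)) (hσ : ∫ u in (0 : ℝ)..1, σ u ≠ 0)
    (hf : Integrable (spectralDensity σ q)) (hqp : q.HolderConjugate p) :
    ∫⁻ u in Icc 0 1, ENNReal.ofReal (|spectralWitness σ p q u| ^ p) = ⊤ := by
  refine eq_top_iff.2 (Eq.trans_le ?_ (lintegral_mono_set Ioo_subset_Icc_self))
  calc ⊤ = ∫⁻ s in Ioo 0 (spectralTail σ q 0), ENNReal.ofReal (s ^ (-1 : ℝ)) :=
        (not_lt_top_iff.1 ((setLIntegral_rpow_Ioo_lt_top_iff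
          (spectralTail_pos hσ0 hσm hσ hf ⟨le_rfl, one_pos⟩)).not.2 (lt_irrefl _))).symm
    _ = ∫⁻ u in Ioo 0 1, ENNReal.ofReal (spectralDensity σ q u) *
          ENNReal.ofReal (spectralTail σ q u ^ (-1 : ℝ)) :=
        (lintegral_comp_integral_left hf (spectralDensity_nonneg hσ0) zero_le_one
          (measurable_id.pow_const _).ennreal_ofReal).symm
    _ = ∫⁻ u in Ioo 0 1, ENNReal.ofReal (|spectralWitness σ p q u| ^ p) :=
        setLIntegral_congr_fun measurableSet_Ioo fun u hu => by
          rw [abs_spectralWitness_rpow hσ0 hf hqp (Ioo_subset_Icc_self hu),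
            ofReal_mul (spectralDensity_nonneg hσ0 u)]

end SpectralWitness

/-- for a spectral function σ ∈ L^q, 1 < q < ∞, with conjugate exponent p,
there is Y with ‖Y‖_σ < ∞ but E|Y|^p = ∞ (on [0,1] with Lebesgue measure):
the inclusion L^p ⊆ L_σ is strict. -/
theorem stmt13 (σ : ℝ → ℝ) (hσ0 : ∀ u ∈ Set.Icc (0 : ℝ) 1, 0 ≤ σ u)
    (hσm : MonotoneOn σ (Set.Icc (0 : ℝ) 1)) (hσmeas : Measurable σ)
    (hσ1 : (∫ u in (0 : ℝ)..1, σ u) = 1)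
    (p q : ℝ) (hq : 1 < q) (hpq : 1 / p + 1 / q = 1)
    (hσq : MemLp σ (ENNReal.ofReal q) (volume.restrict (Set.Ioo (0 : ℝ) 1))) :
    ∃ Y : ℝ → ℝ, Measurable Y ∧
      sigmaNorm (volume.restrict (Set.Icc (0 : ℝ) 1)) σ Y < ⊤ ∧
      (∫⁻ ω in Set.Icc (0 : ℝ) 1, ENNReal.ofReal (|Y ω| ^ p)) = ⊤ := by
  have hqp : q.HolderConjugate p :=
    Real.holderConjugate_iff.2 ⟨hq, by simpa [add_comm] using hpq⟩
  have hσ : ∫ u in (0 : ℝ)..1, σ u ≠ 0 := by rw [hσ1]; exact one_ne_zero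
  have hf := integrable_spectralDensity hσ0 hqp.pos hσq
  have hY : Measurable (spectralWitness σ p q) :=
    (hσmeas.pow_const _).mul ((continuous_integral_left hf).measurable.pow_const _)
  exact ⟨spectralWitness σ p q, hY, sigmaNorm_spectralWitness_lt_top hσ0 hσm hσ hf hqp,
    setLIntegral_abs_spectralWitness_rpow_eq_top hσ0 hσm hσ hf hqp⟩
end

section
/- The space L_σ := {Y ∈ L⁰ : ‖Y‖_σ < ∞} with norm ‖Y‖_σ := ∫₀¹ σ(u) F_{|Y|}^{-1}(u) du is a Banach space: every Cauchy sequence for ‖·‖_σ converges in L_σ. -/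
open MeasureTheory ENNReal

/-!
A σ-Cauchy sequence is Cauchy in probability: σ is nondecreasing with integral one, so it
carries positive mass `∫_{1-ε}^1 σ` near `1`, and a tail `P(|X| > t) ≥ ε` forces
`‖X‖_σ ≥ t ∫_{1-ε}^1 σ`. Hence a subsequence `Y_{n_k}` converges almost surely to some `Z`.
The σ-norm is lower semicontinuous under almost sure convergence: Fatou's lemma passes from the
tail probabilities to the quantiles through the layer-cake formula
`q(u) = |{t > 0 : P(W > t) > 1 - u}|`, and then to `∫ σ q`. This gives
`‖Y_m - Z‖_σ ≤ liminf_k ‖Y_m - Y_{n_k}‖_σ`. Finally `‖Z‖_σ < ∞` by the quasi-triangle inequality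
`‖A + B‖_σ ≤ 2 (‖A‖_σ + ‖B‖_σ)`, which follows from `q_{|A+B|}(u) ≤ q_{|A|}(v) + q_{|B|}(v)` for
`v = (1 + u) / 2` together with `σ u ≤ σ v` and the substitution `u ↦ v`.
-/

open Filter Set Topology ProbabilityTheory

lemma sInf_le_iff_le_cdf (ν : Measure ℝ) [IsProbabilityMeasure ν] {u t : ℝ}
    (hu : u ∈ Ioo (0 : ℝ) 1) :
    sInf {y | u ≤ cdf ν y} ≤ t ↔ u ≤ cdf ν t := by
  have hne : {y | u ≤ cdf ν y}.Nonempty :=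
    ((tendsto_cdf_atTop ν).eventually (eventually_ge_nhds hu.2)).exists
  have hbdd : BddBelow {y | u ≤ cdf ν y} := by
    obtain ⟨y₀, hy₀⟩ :=
      ((tendsto_cdf_atBot ν).eventually (eventually_lt_nhds hu.1)).exists_forall_of_atBot
    exact ⟨y₀, fun y hy => le_of_not_ge fun hyy₀ => (hy₀ y hyy₀).not_ge hy⟩
  refine ⟨fun h => ?_, fun h => csInf_le hbdd h⟩
  have hright : ∀ s > t, u ≤ cdf ν s := fun s hs =>
    let ⟨y, hy, hys⟩ := (csInf_lt_iff hbdd hne).1 (h.trans_lt hs)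
    hy.trans ((cdf ν).mono hys.le)
  exact ge_of_tendsto (((cdf ν).right_continuous' t).mono Ioi_subset_Ici_self)
    (eventually_nhdsWithin_of_forall hright)

lemma measure_le_liminf_measure {α : Type*} [MeasurableSpace α] {μ : Measure α} {s : Set α}
    {t : ℕ → Set α} (h : ∀ᵐ x ∂μ, x ∈ s → ∀ᶠ k in atTop, x ∈ t k) :
    μ s ≤ liminf (fun k => μ (t k)) atTop := by
  have hmono : Monotone fun n => ⋂ k ≥ n, t k := fun m n hmn =>
    biInter_subset_biInter_left fun k hk => hmn.trans hk
  calc μ s ≤ μ (liminf t atTop) :=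
        measure_mono_ae (h.mono fun x hx hxs => mem_liminf_iff_eventually_mem.2 (hx hxs))
    _ = ⨆ n, μ (⋂ k ≥ n, t k) := by
        rw [liminf_eq_iSup_iInf_of_nat, ← hmono.measure_iUnion]
        rfl
    _ ≤ liminf (fun k => μ (t k)) atTop := by
        rw [liminf_eq_iSup_iInf_of_nat]
        exact iSup_mono fun n => le_iInf₂ fun k hk => measure_mono (biInter_subset_of_mem hk)

lemma measure_lt_le_liminf_of_tendsto_ae {Ω : Type*} [MeasurableSpace Ω] {μ : Measure Ω}
    {W : Ω → ℝ} {V : ℕ → Ω → ℝ} (h : ∀ᵐ ω ∂μ, Tendsto (fun k => V k ω) atTop (𝓝 (W ω)))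
    (t : ℝ) : μ {ω | t < W ω} ≤ liminf (fun k => μ {ω | t < V k ω}) atTop :=
  measure_le_liminf_measure (h.mono fun _ hω hlt => hω.eventually (lt_mem_nhds hlt))

lemma setLIntegral_Ioo_comp_half_add_half (g : ℝ → ℝ≥0∞) :
    ∫⁻ u in Ioo (0 : ℝ) 1, g ((1 + u) / 2) = 2 * ∫⁻ v in Ioo (2⁻¹ : ℝ) 1, g v := by
  have himage : (fun u : ℝ => (1 + u) / 2) '' Ioo 0 1 = Ioo 2⁻¹ 1 := by
    ext v
    constructor
    · rintro ⟨u, hu, rfl⟩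
      exact ⟨by linarith [hu.1], by linarith [hu.2]⟩
    · intro hv
      exact ⟨2 * v - 1, ⟨by linarith [hv.1], by linarith [hv.2]⟩, by ring⟩
  have hderiv : ∀ u ∈ Ioo (0 : ℝ) 1,
      HasDerivWithinAt (fun u : ℝ => (1 + u) / 2) (1 / 2) (Ioo 0 1) u := fun u _ =>
    (((hasDerivAt_id u).const_add 1).div_const 2).hasDerivWithinAt
  rw [← himage, lintegral_image_eq_lintegral_abs_deriv_mul measurableSet_Ioo hderiv
    (fun x _ y _ h => by linarith [h]), ← lintegral_const_mul' _ _ ENNReal.ofNat_ne_top]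
  congr 1 with u
  rw [← mul_assoc, abs_of_pos one_half_pos, ENNReal.ofReal_div_of_pos two_pos, ENNReal.ofReal_one,
    ENNReal.ofReal_ofNat, ENNReal.mul_div_cancel two_ne_zero ofNat_ne_top, one_mul]

lemma setLIntegral_ofReal_Ioo_one_pos {σ : ℝ → ℝ} (hσ0 : ∀ u ∈ Ioo (0 : ℝ) 1, 0 ≤ σ u)
    (hσm : MonotoneOn σ (Ioo 0 1)) (hσmeas : Measurable σ) (hσ1 : ∫ u in (0 : ℝ)..1, σ u = 1)
    {c : ℝ} (hc : c < 1) : 0 < ∫⁻ u in Ioo c 1, ENNReal.ofReal (σ u) := by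
  rw [pos_iff_ne_zero, Ne, lintegral_eq_zero_iff hσmeas.ennreal_ofReal]
  intro h
  have : (ae (volume.restrict (Ioo (max c 0) 1))).NeBot := ae_neBot.2 (by simp [hc])
  have h' : ∀ᵐ u ∂volume.restrict (Ioo (max c 0) 1), σ u ≤ 0 :=
    (ae_restrict_of_ae_restrict_of_subset (Ioo_subset_Ioo_left (le_max_left _ _)) h).mono
      fun u hu => ENNReal.ofReal_eq_zero.1 hu
  obtain ⟨b, hb, hbmem⟩ := (h'.and (ae_restrict_mem measurableSet_Ioo)).exists
  have hb01 : b ∈ Ioo (0 : ℝ) 1 := ⟨(le_max_right _ _).trans_lt hbmem.1, hbmem.2⟩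
  -- below `b` monotonicity forces `σ = 0`, above `b` the hypothesis `h` does
  have hzero : σ =ᵐ[volume.restrict (Ioo 0 1)] 0 := by
    rw [EventuallyEq, ae_restrict_iff' measurableSet_Ioo]
    filter_upwards [ae_imp_of_ae_restrict h] with u hu hu01
    refine le_antisymm ?_ (hσ0 u hu01)
    rcases le_or_gt u b with hub | hbu
    · exact (hσm hu01 hb01 hub).trans hb
    · exact ENNReal.ofReal_eq_zero.1
        (hu ⟨(le_max_left _ _).trans_lt (hbmem.1.trans hbu), hu01.2⟩)
  rw [intervalIntegral.integral_of_le zero_le_one, integral_Ioc_eq_integral_Ioo,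
    integral_eq_zero_of_ae hzero] at hσ1
  exact zero_ne_one hσ1

-- A single `ε` bounds both the deviation and its probability; this is equivalent to the usual
-- two-parameter definition.
def CauchyInMeasure {Ω E : Type*} [MeasurableSpace Ω] [PseudoMetricSpace E] (μ : Measure Ω)
    (f : ℕ → Ω → E) : Prop :=
  ∀ ε > 0, ∃ N, ∀ m ≥ N, ∀ n ≥ N, μ {ω | ε < dist (f m ω) (f n ω)} < ENNReal.ofReal ε

lemma CauchyInMeasure.exists_subseq_tendsto_ae {Ω E : Type*} [MeasurableSpace Ω]
    {μ : Measure Ω} [PseudoMetricSpace E] [CompleteSpace E] [MeasurableSpace E] [BorelSpace E]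
    {f : ℕ → Ω → E} (hf : CauchyInMeasure μ f) (hfm : ∀ n, AEMeasurable (f n) μ) :
    ∃ φ : ℕ → ℕ, StrictMono φ ∧ ∃ g : Ω → E, Measurable g ∧
      ∀ᵐ ω ∂μ, Tendsto (fun k => f (φ k) ω) atTop (𝓝 (g ω)) := by
  have hev : ∀ k : ℕ, ∃ N, ∀ j ≥ N, ∀ m ≥ j,
      μ {ω | (1 / 2 : ℝ) ^ k < dist (f m ω) (f j ω)} < ENNReal.ofReal ((1 / 2) ^ k) := by
    intro k
    obtain ⟨N, hN⟩ := hf _ (pow_pos one_half_pos k)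
    exact ⟨N, fun j hj m hm => hN m (hj.trans hm) j hj⟩
  obtain ⟨φ, hφ, hφN⟩ := extraction_forall_of_eventually' hev
  have hsum : ∑' k, μ {ω | (1 / 2 : ℝ) ^ k < dist (f (φ (k + 1)) ω) (f (φ k) ω)} ≠ ∞ := by
    refine ne_top_of_le_ne_top ?_
      (ENNReal.tsum_le_tsum fun k => (hφN k _ (hφ k.lt_succ_self).le).le)
    rw [← ENNReal.ofReal_tsum_of_nonneg (fun k => by positivity) summable_geometric_two]
    exact ENNReal.ofReal_ne_top
  have hcauchy : ∀ᵐ ω ∂μ, CauchySeq fun k => f (φ k) ω :=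
    (ae_eventually_notMem hsum).mono fun ω hω => cauchySeq_of_summable_dist <|
      summable_geometric_two.of_norm_bounded_eventually_nat <| hω.mono fun k hk => by
        rw [Real.norm_of_nonneg dist_nonneg, dist_comm]
        exact not_lt.1 hk
  exact ⟨φ, hφ, measurable_limit_of_tendsto_metrizable_ae (fun k => hfm (φ k))
    (hcauchy.mono fun ω hω => cauchySeq_tendsto_of_complete hω)⟩

section Quantile

variable {Ω : Type*} [MeasurableSpace Ω] {μ : Measure Ω} [IsProbabilityMeasure μ]
  {W : Ω → ℝ} {u t : ℝ}

lemma quantile_le_iff (hW : Measurable W) (hu : u ∈ Ioo (0 : ℝ) 1) :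
    quantile μ W u ≤ t ↔ u ≤ μ.real {ω | W ω ≤ t} := by
  have := Measure.isProbabilityMeasure_map (μ := μ) hW.aemeasurable
  have hcdf : ∀ y, μ.real {ω | W ω ≤ y} = cdf (μ.map W) y := fun y => by
    rw [cdf_eq_real, map_measureReal_apply hW measurableSet_Iic]
    rfl
  simp only [quantile, ← measureReal_def, hcdf]
  exact sInf_le_iff_le_cdf _ hu

lemma lt_quantile_iff (hW : Measurable W) (hu : u ∈ Ioo (0 : ℝ) 1) :
    t < quantile μ W u ↔ ENNReal.ofReal (1 - u) < μ {ω | t < W ω} := by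
  have hcompl : {ω | t < W ω} = {ω | W ω ≤ t}ᶜ := by ext; simp
  rw [← not_le, quantile_le_iff hW hu, not_le,
    ENNReal.ofReal_lt_iff_lt_toReal (by linarith [hu.2]) (measure_ne_top μ _), ← measureReal_def,
    hcompl, probReal_compl_eq_one_sub (measurableSet_le hW measurable_const)]
  constructor <;> intro h <;> linarith

lemma quantile_nonneg_s15 (hW : Measurable W) (hW0 : ∀ ω, 0 ≤ W ω) (hu : u ∈ Ioo (0 : ℝ) 1) :
    0 ≤ quantile μ W u := by
  by_contra! hneg
  have hempty : {ω | W ω ≤ quantile μ W u} = ∅ :=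
    eq_empty_of_forall_notMem fun ω hω => (hW0 ω).not_gt (lt_of_le_of_lt hω hneg)
  have := (quantile_le_iff (μ := μ) hW hu).1 le_rfl
  rw [hempty, measureReal_empty] at this
  linarith [hu.1]

lemma quantile_monotoneOn_s15 (hW : Measurable W) : MonotoneOn (quantile μ W) (Ioo 0 1) :=
  fun _ hu _ hv huv => (quantile_le_iff hW hu).2 (huv.trans ((quantile_le_iff hW hv).1 le_rfl))

lemma ofReal_quantile_eq_volume (hW : Measurable W) (hu : u ∈ Ioo (0 : ℝ) 1) :
    ENNReal.ofReal (quantile μ W u) =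
      volume {t : ℝ | 0 < t ∧ ENNReal.ofReal (1 - u) < μ {ω | t < W ω}} := by
  have hset : {t : ℝ | 0 < t ∧ ENNReal.ofReal (1 - u) < μ {ω | t < W ω}} =
      Ioo 0 (quantile μ W u) := by
    ext t
    simp only [mem_ofPred_eq, mem_Ioo, lt_quantile_iff hW hu]
  rw [hset, Real.volume_Ioo, sub_zero]

end Quantile

section Fatou

variable {Ω : Type*} [MeasurableSpace Ω] {μ : Measure Ω} [IsProbabilityMeasure μ]

lemma ofReal_quantile_le_liminf {W : Ω → ℝ} {V : ℕ → Ω → ℝ} (hW : Measurable W)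
    (hV : ∀ k, Measurable (V k))
    (h : ∀ t, μ {ω | t < W ω} ≤ liminf (fun k => μ {ω | t < V k ω}) atTop) {u : ℝ}
    (hu : u ∈ Ioo (0 : ℝ) 1) :
    ENNReal.ofReal (quantile μ W u) ≤
      liminf (fun k => ENNReal.ofReal (quantile μ (V k) u)) atTop := by
  simp only [ofReal_quantile_eq_volume hW hu, ofReal_quantile_eq_volume (hV _) hu]
  exact measure_le_liminf_measure (ae_of_all _ fun t ⟨ht0, ht⟩ =>
    (eventually_lt_of_lt_liminf (ht.trans_le (h t))).mono fun _ hk => ⟨ht0, hk⟩)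

lemma sigmaNorm_le_liminf {σ : ℝ → ℝ} (hσ0 : ∀ u ∈ Ioo (0 : ℝ) 1, 0 ≤ σ u)
    (hσmeas : Measurable σ) {X : Ω → ℝ} {V : ℕ → Ω → ℝ} (hX : Measurable X)
    (hV : ∀ k, Measurable (V k)) (h : ∀ᵐ ω ∂μ, Tendsto (fun k => V k ω) atTop (𝓝 (X ω))) :
    sigmaNorm μ σ X ≤ liminf (fun k => sigmaNorm μ σ (V k)) atTop := by
  have habs : ∀ᵐ ω ∂μ, Tendsto (fun k => |V k ω|) atTop (𝓝 |X ω|) := h.mono fun _ hω => hω.abs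
  refine (setLIntegral_mono' measurableSet_Ioo fun u hu => ?_).trans
    (lintegral_liminf_le' fun k => ?_)
  · simp only [ENNReal.ofReal_mul (hσ0 u hu)]
    rw [ENNReal.liminf_const_mul_of_ne_top ENNReal.ofReal_ne_top]
    exact mul_le_mul_right (ofReal_quantile_le_liminf hX.abs (fun k => (hV k).abs)
      (measure_lt_le_liminf_of_tendsto_ae habs) hu) _
  · exact ENNReal.measurable_ofReal.comp_aemeasurable (hσmeas.aemeasurable.mul
      (aemeasurable_restrict_of_monotoneOn measurableSet_Ioo (quantile_monotoneOn_s15 (hV k).abs)))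

end Fatou

section QuasiTriangle

variable {Ω : Type*} [MeasurableSpace Ω] {μ : Measure Ω} [IsProbabilityMeasure μ]

lemma quantile_le_add_of_le_add {V W₁ W₂ : Ω → ℝ} (hV : Measurable V) (hW₁ : Measurable W₁)
    (hW₂ : Measurable W₂) (hle : ∀ ω, V ω ≤ W₁ ω + W₂ ω) {u : ℝ} (hu : u ∈ Ioo (0 : ℝ) 1) :
    quantile μ V u ≤ quantile μ W₁ ((1 + u) / 2) + quantile μ W₂ ((1 + u) / 2) := by
  have hv : (1 + u) / 2 ∈ Ioo (0 : ℝ) 1 := ⟨by linarith [hu.1], by linarith [hu.2]⟩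
  set a := quantile μ W₁ ((1 + u) / 2)
  set b := quantile μ W₂ ((1 + u) / 2)
  have ha := (quantile_le_iff (μ := μ) (t := a) hW₁ hv).1 le_rfl
  have hb := (quantile_le_iff (μ := μ) (t := b) hW₂ hv).1 le_rfl
  have hsub : {ω | W₁ ω ≤ a} ∩ {ω | W₂ ω ≤ b} ⊆ {ω | V ω ≤ a + b} :=
    fun ω hω => (hle ω).trans (add_le_add hω.1 hω.2)
  have hunion := measureReal_union_add_inter (μ := μ) (s := {ω | W₁ ω ≤ a})
    (t := {ω | W₂ ω ≤ b}) (measurableSet_le hW₂ measurable_const)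
  have hle_one := measureReal_le_one (μ := μ) (s := {ω | W₁ ω ≤ a} ∪ {ω | W₂ ω ≤ b})
  rw [quantile_le_iff hV hu]
  linarith [measureReal_mono (μ := μ) hsub]

lemma sigmaNorm_add_le {σ : ℝ → ℝ} (hσ0 : ∀ u ∈ Ioo (0 : ℝ) 1, 0 ≤ σ u)
    (hσm : MonotoneOn σ (Ioo 0 1)) (hσmeas : Measurable σ) {A B : Ω → ℝ}
    (hA : Measurable A) (hB : Measurable B) :
    sigmaNorm μ σ (A + B) ≤ 2 * (sigmaNorm μ σ A + sigmaNorm μ σ B) := by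
  set f : ℝ → ℝ≥0∞ := fun v => ENNReal.ofReal (σ v * quantile μ (fun ω => |A ω|) v)
  set g : ℝ → ℝ≥0∞ := fun v => ENNReal.ofReal (σ v * quantile μ (fun ω => |B ω|) v)
  have hf : AEMeasurable f (volume.restrict (Ioo 0 1)) :=
    ENNReal.measurable_ofReal.comp_aemeasurable (hσmeas.aemeasurable.mul
      (aemeasurable_restrict_of_monotoneOn measurableSet_Ioo (quantile_monotoneOn_s15 hA.abs)))
  have hpt : ∀ u ∈ Ioo (0 : ℝ) 1, ENNReal.ofReal (σ u * quantile μ (fun ω => |(A + B) ω|) u) ≤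
      (f + g) ((1 + u) / 2) := fun u hu => by
    have hv : (1 + u) / 2 ∈ Ioo (0 : ℝ) 1 := ⟨by linarith [hu.1], by linarith [hu.2]⟩
    calc ENNReal.ofReal (σ u * quantile μ (fun ω => |(A + B) ω|) u)
        ≤ ENNReal.ofReal (σ ((1 + u) / 2) * (quantile μ (fun ω => |A ω|) ((1 + u) / 2) +
            quantile μ (fun ω => |B ω|) ((1 + u) / 2))) :=
          ENNReal.ofReal_le_ofReal <| mul_le_mul (hσm hu hv (by linarith [hu.2]))
            (quantile_le_add_of_le_add (hA.add hB).abs hA.abs hB.abs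
              (fun ω => abs_add_le _ _) hu)
            (quantile_nonneg_s15 (hA.add hB).abs (fun _ => abs_nonneg _) hu) (hσ0 _ hv)
      _ ≤ (f + g) ((1 + u) / 2) := by
          rw [mul_add]
          exact ENNReal.ofReal_add_le
  calc sigmaNorm μ σ (A + B) ≤ ∫⁻ u in Ioo 0 1, (f + g) ((1 + u) / 2) :=
        setLIntegral_mono' measurableSet_Ioo hpt
    _ = 2 * ∫⁻ v in Ioo 2⁻¹ 1, (f + g) v := setLIntegral_Ioo_comp_half_add_half _
    _ ≤ 2 * ∫⁻ v in Ioo 0 1, (f + g) v :=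
        mul_le_mul_right (lintegral_mono_set (Ioo_subset_Ioo_left (by norm_num))) _
    _ = 2 * (sigmaNorm μ σ A + sigmaNorm μ σ B) := by
        rw [Pi.add_def, lintegral_add_left' hf]
        rfl

end QuasiTriangle

section SigmaNorm

variable {Ω : Type*} [MeasurableSpace Ω] {μ : Measure Ω} {σ : ℝ → ℝ}

lemma sigmaNorm_sub_comm (X X' : Ω → ℝ) : sigmaNorm μ σ (X - X') = sigmaNorm μ σ (X' - X) := by
  simp only [sigmaNorm, Pi.sub_apply, abs_sub_comm]

lemma mul_lintegral_le_sigmaNorm [IsProbabilityMeasure μ] (hσ0 : ∀ u ∈ Ioo (0 : ℝ) 1, 0 ≤ σ u)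
    {X : Ω → ℝ} (hX : Measurable X) {t ε : ℝ} (h : ENNReal.ofReal ε ≤ μ {ω | t < |X ω|}) :
    ENNReal.ofReal t * ∫⁻ u in Ioo (1 - ε) 1, ENNReal.ofReal (σ u) ≤ sigmaNorm μ σ X := by
  have hε1 : ε ≤ 1 := ENNReal.ofReal_le_one.1 (h.trans prob_le_one)
  have hsub : Ioo (1 - ε) 1 ⊆ Ioo 0 1 := Ioo_subset_Ioo_left (by linarith)
  rw [← lintegral_const_mul' _ _ ENNReal.ofReal_ne_top]
  refine (setLIntegral_mono' measurableSet_Ioo fun u hu => ?_).trans (lintegral_mono_set hsub)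
  have hσu := hσ0 u (hsub hu)
  have hq : t < quantile μ (fun ω => |X ω|) u := (lt_quantile_iff hX.abs (hsub hu)).2
    ((ENNReal.ofReal_lt_ofReal_iff'.2 ⟨by linarith [hu.1], by linarith [hu.1, hu.2]⟩).trans_le h)
  rw [mul_comm, ← ENNReal.ofReal_mul hσu]
  exact ENNReal.ofReal_le_ofReal (mul_le_mul_of_nonneg_left hq.le hσu)

end SigmaNorm

lemma cauchyInMeasure_of_sigmaNorm {Ω : Type*} [MeasurableSpace Ω] {μ : Measure Ω}
    [IsProbabilityMeasure μ] {σ : ℝ → ℝ} (hσ0 : ∀ u ∈ Ioo (0 : ℝ) 1, 0 ≤ σ u)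
    (hσm : MonotoneOn σ (Ioo 0 1)) (hσmeas : Measurable σ) (hσ1 : ∫ u in (0 : ℝ)..1, σ u = 1)
    {Y : ℕ → Ω → ℝ} (hY : ∀ n, Measurable (Y n))
    (hcauchy : ∀ ε : ℝ≥0∞, 0 < ε → ∃ N : ℕ, ∀ m ≥ N, ∀ n ≥ N,
      sigmaNorm μ σ (fun ω => Y m ω - Y n ω) < ε) :
    CauchyInMeasure μ Y := by
  intro ε hε
  obtain ⟨N, hN⟩ := hcauchy _ (ENNReal.mul_pos (ENNReal.ofReal_pos.2 hε).ne'
    (setLIntegral_ofReal_Ioo_one_pos hσ0 hσm hσmeas hσ1 (by linarith : 1 - ε < 1)).ne')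
  exact ⟨N, fun m hm n hn => lt_of_not_ge fun h =>
    (hN m hm n hn).not_ge (mul_lintegral_le_sigmaNorm hσ0 ((hY m).sub (hY n)) h)⟩

theorem stmt15_general {Ω : Type*} [MeasurableSpace Ω] (μ : Measure Ω) [IsProbabilityMeasure μ]
    (σ : ℝ → ℝ) (hσ0 : ∀ u ∈ Set.Icc (0 : ℝ) 1, 0 ≤ σ u)
    (hσm : MonotoneOn σ (Set.Icc (0 : ℝ) 1)) (hσmeas : Measurable σ)
    (hσ1 : (∫ u in (0 : ℝ)..1, σ u) = 1)
    (Y : ℕ → Ω → ℝ) (hYm : ∀ n, Measurable (Y n))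
    (hYfin : ∀ n, sigmaNorm μ σ (Y n) < ⊤)
    (hcauchy : ∀ ε : ℝ≥0∞, 0 < ε → ∃ N : ℕ, ∀ m ≥ N, ∀ n ≥ N,
      sigmaNorm μ σ (fun ω => Y m ω - Y n ω) < ε) :
    ∃ Z : Ω → ℝ, Measurable Z ∧ sigmaNorm μ σ Z < ⊤ ∧
      Filter.Tendsto (fun n => sigmaNorm μ σ (fun ω => Y n ω - Z ω))
        Filter.atTop (nhds 0) := by
  have hσ0' : ∀ u ∈ Ioo (0 : ℝ) 1, 0 ≤ σ u := fun u hu => hσ0 u (Ioo_subset_Icc_self hu)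
  have hσm' := hσm.mono Ioo_subset_Icc_self
  obtain ⟨φ, hφ, Z, hZm, hZ⟩ := (cauchyInMeasure_of_sigmaNorm hσ0' hσm' hσmeas hσ1 hYm
    hcauchy).exists_subseq_tendsto_ae fun n => (hYm n).aemeasurable
  have hlim : ∀ ε > 0, ∃ N, ∀ m ≥ N, sigmaNorm μ σ (fun ω => Y m ω - Z ω) ≤ ε := by
    intro ε hε
    obtain ⟨N, hN⟩ := hcauchy ε hε
    refine ⟨N, fun m hm => (sigmaNorm_le_liminf hσ0' hσmeas ((hYm m).sub hZm)
      (fun k => (hYm m).sub (hYm (φ k))) (hZ.mono fun ω hω => tendsto_const_nhds.sub hω)).trans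
      (liminf_le_of_frequently_le' (Eventually.frequently ?_))⟩
    filter_upwards [eventually_ge_atTop N] with k hk
    exact (hN m hm _ (hk.trans hφ.le_apply)).le
  refine ⟨Z, hZm, ?_, ENNReal.tendsto_atTop_zero.2 hlim⟩
  obtain ⟨M, hM⟩ := hlim 1 one_pos
  calc sigmaNorm μ σ Z = sigmaNorm μ σ (Y M + (Z - Y M)) := by rw [add_sub_cancel]
    _ ≤ 2 * (sigmaNorm μ σ (Y M) + sigmaNorm μ σ (Z - Y M)) :=
        sigmaNorm_add_le hσ0' hσm' hσmeas (hYm M) (hZm.sub (hYm M))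
    _ < ⊤ := by
        rw [sigmaNorm_sub_comm]
        exact ENNReal.mul_lt_top ofNat_lt_top
          (ENNReal.add_lt_top.2 ⟨hYfin M, (hM M le_rfl).trans_lt one_lt_top⟩)

/-- (L_σ, ‖·‖_σ) is complete: every Cauchy sequence for ‖·‖_σ converges to
an element of L_σ in the ‖·‖_σ norm. -/
theorem stmt15 {Ω : Type*} [MeasurableSpace Ω] (μ : Measure Ω) [IsProbabilityMeasure μ]
    [NullSingletonClass μ]
    (σ : ℝ → ℝ) (hσ0 : ∀ u ∈ Set.Icc (0 : ℝ) 1, 0 ≤ σ u)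
    (hσm : MonotoneOn σ (Set.Icc (0 : ℝ) 1)) (hσmeas : Measurable σ)
    (hσ1 : (∫ u in (0 : ℝ)..1, σ u) = 1)
    (Y : ℕ → Ω → ℝ) (hYm : ∀ n, Measurable (Y n))
    (hYfin : ∀ n, sigmaNorm μ σ (Y n) < ⊤)
    (hcauchy : ∀ ε : ℝ≥0∞, 0 < ε → ∃ N : ℕ, ∀ m ≥ N, ∀ n ≥ N,
      sigmaNorm μ σ (fun ω => Y m ω - Y n ω) < ε) :
    ∃ Z : Ω → ℝ, Measurable Z ∧ sigmaNorm μ σ Z < ⊤ ∧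
      Filter.Tendsto (fun n => sigmaNorm μ σ (fun ω => Y n ω - Z ω))
        Filter.atTop (nhds 0) :=
  stmt15_general μ σ hσ0 hσm hσmeas hσ1 Y hYm hYfin hcauchy
end

section
/- For any measurable set A, the dual norm of the indicator satisfies ‖1_A‖_σ* = P(A) / ∫_{1−P(A)}^1 σ(u) du, and consequently P(A) ≤ ‖1_A‖_σ* ≤ 1. -/
open MeasureTheory ENNReal

/-- The dual σ-norm ‖Z‖_σ* = inf{η ≥ 0 : AVaR_α(|Z|) ≤ (η/(1−α))∫_α¹ σ for all α ∈ [0,1)}. -/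
noncomputable def sigmaDualNorm {Ω : Type*} [MeasurableSpace Ω] (μ : Measure Ω)
    (σ : ℝ → ℝ) (Z : Ω → ℝ) : ℝ :=
  sInf {η : ℝ | 0 ≤ η ∧ ∀ α ∈ Set.Ico (0 : ℝ) 1,
    avar μ (fun ω => |Z ω|) α ≤ η / (1 - α) * ∫ u in α..1, σ u}

/-! The quantile function of `|1_A|` is the indicator of `(1 - q, 1]`, where `q = P(A)`, so
`AVaR_α(1_A) = min (1 - α) q / (1 - α)` and `η ≥ 0` is admissible iff
`min (1 - α) q ≤ η ∫_α¹ σ` for all `α ∈ [0, 1)`. The constraint at `α = 1 - q` is the binding one: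
below it because `∫_α¹ σ` decreases in `α` (as `σ ≥ 0`), above it because the average
`(1 - α)⁻¹ ∫_α¹ σ` of the nondecreasing `σ` increases in `α`. The same monotonicity of averages
gives `q ≤ ∫_{1-q}¹ σ ≤ 1`, whence `q ≤ ‖1_A‖_σ* ≤ 1`. -/

open Set

/-- Averages of a monotone function over `[b, c]` increase with `b`, multiplied out. -/
theorem MonotoneOn.sub_mul_intervalIntegral_le {f : ℝ → ℝ} {a b c : ℝ}
    (hf : MonotoneOn f (Icc a c)) (hab : a ≤ b) (hbc : b ≤ c) :
    (c - b) * ∫ x in a..c, f x ≤ (c - a) * ∫ x in b..c, f x := by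
  have hfab : IntervalIntegrable f volume a b :=
    (hf.mono (uIcc_of_le hab ▸ Icc_subset_Icc_right hbc)).intervalIntegrable
  have hfbc : IntervalIntegrable f volume b c :=
    (hf.mono (uIcc_of_le hbc ▸ Icc_subset_Icc_left hab)).intervalIntegrable
  have hb : b ∈ Icc a c := ⟨hab, hbc⟩
  have hleft : ∫ x in a..b, f x ≤ (b - a) * f b := by
    simpa using intervalIntegral.integral_mono_on hab hfab intervalIntegrable_const
      fun x hx => hf ⟨hx.1, hx.2.trans hbc⟩ hb hx.2
  have hright : (c - b) * f b ≤ ∫ x in b..c, f x := by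
    simpa using intervalIntegral.integral_mono_on hbc intervalIntegrable_const hfbc
      fun x hx => hf hb ⟨hab.trans hx.1, hx.2⟩ hx.1
  rw [← intervalIntegral.integral_add_adjacent_intervals hfab hfbc]
  nlinarith [mul_le_mul_of_nonneg_left hleft (sub_nonneg.2 hbc),
    mul_le_mul_of_nonneg_left hright (sub_nonneg.2 hab)]

section Spectral

variable {σ : ℝ → ℝ} (hσ0 : ∀ u ∈ Icc (0 : ℝ) 1, 0 ≤ σ u) (hσm : MonotoneOn σ (Icc (0 : ℝ) 1))
  (hσ1 : ∫ u in (0 : ℝ)..1, σ u = 1)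

include hσ0 hσm in
theorem intervalIntegral_one_anti {a b : ℝ} (ha : 0 ≤ a) (hab : a ≤ b) (hb : b ≤ 1) :
    ∫ u in b..1, σ u ≤ ∫ u in a..1, σ u :=
  intervalIntegral.integral_mono_interval hab hb le_rfl
    ((ae_restrict_mem measurableSet_Ioc).mono fun u hu => hσ0 u ⟨ha.trans hu.1.le, hu.2⟩)
    (hσm.mono (by rw [uIcc_of_le (by linarith)]; exact Icc_subset_Icc ha le_rfl)).intervalIntegrable

include hσm hσ1 in
theorem one_sub_le_intervalIntegral {a : ℝ} (ha : 0 ≤ a) (ha1 : a ≤ 1) :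
    1 - a ≤ ∫ u in a..1, σ u := by
  simpa [hσ1] using hσm.sub_mul_intervalIntegral_le ha ha1

include hσ0 hσm hσ1 in
theorem div_intervalIntegral_mem_Icc {q : ℝ} (hq0 : 0 ≤ q) (hq1 : q ≤ 1) :
    q / ∫ u in (1 - q)..1, σ u ∈ Icc q 1 := by
  rcases hq0.eq_or_lt with rfl | hq
  · simp
  have hqS : q ≤ ∫ u in (1 - q)..1, σ u := by
    simpa using one_sub_le_intervalIntegral hσm hσ1 (by linarith : 0 ≤ 1 - q) (by linarith)
  have hS1 : ∫ u in (1 - q)..1, σ u ≤ 1 := by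
    simpa [hσ1] using intervalIntegral_one_anti hσ0 hσm le_rfl (by linarith) (by linarith)
  exact ⟨le_div_self hq0 (hq.trans_le hqS) hS1, div_le_one_of_le₀ hqS (hq0.trans hqS)⟩

include hσ0 hσm hσ1 in
theorem isLeast_div_intervalIntegral {q : ℝ} (hq0 : 0 ≤ q) (hq1 : q ≤ 1) :
    IsLeast {η : ℝ | 0 ≤ η ∧ ∀ α ∈ Ico (0 : ℝ) 1, min (1 - α) q ≤ η * ∫ u in α..1, σ u}
      (q / ∫ u in (1 - q)..1, σ u) := by
  rcases hq0.eq_or_lt with rfl | hq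
  · refine ⟨⟨by simp, fun α hα => ?_⟩, fun η hη => by simpa using hη.1⟩
    simp [min_eq_right (sub_nonneg.2 hα.2.le)]
  set S := ∫ u in (1 - q)..1, σ u
  have hS : 0 < S := hq.trans_le
    (by simpa using one_sub_le_intervalIntegral hσm hσ1 (by linarith : 0 ≤ 1 - q) (by linarith))
  refine ⟨⟨div_nonneg hq0 hS.le, fun α ⟨hα0, hα1⟩ => ?_⟩, fun η ⟨_, hη⟩ => ?_⟩
  · rcases le_total α (1 - q) with hα | hα
    · rw [min_eq_right (by linarith)]
      calc q = q / S * S := (div_mul_cancel₀ q hS.ne').symm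
        _ ≤ q / S * ∫ u in α..1, σ u := by
          gcongr
          exact intervalIntegral_one_anti hσ0 hσm hα0 hα (by linarith)
    · rw [min_eq_left (by linarith), div_mul_eq_mul_div, le_div_iff₀ hS]
      have := (hσm.mono (Icc_subset_Icc (by linarith) le_rfl)).sub_mul_intervalIntegral_le hα hα1.le
      rwa [_root_.sub_sub_cancel] at this
  · have := hη (1 - q) ⟨by linarith, by linarith⟩
    rwa [_root_.sub_sub_cancel, min_self, ← div_le_iff₀ hS] at this

end Spectral

section Indicator

variable {Ω : Type*} [MeasurableSpace Ω] (μ : Measure Ω) [IsProbabilityMeasure μ] {A : Set Ω}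

theorem measureReal_indicator_one_le (hA : MeasurableSet A) (y : ℝ) :
    μ.real {ω | A.indicator (fun _ => (1 : ℝ)) ω ≤ y} =
      if y < 0 then 0 else if y < 1 then 1 - μ.real A else 1 := by
  split_ifs with hy0 hy1
  · convert measureReal_empty (μ := μ)
    ext ω
    by_cases hω : ω ∈ A <;> simp [hω] <;> linarith
  · rw [← probReal_compl_eq_one_sub hA]
    congr 1
    ext ω
    by_cases hω : ω ∈ A <;> simp [hω] <;> linarith
  · convert probReal_univ (μ := μ)
    ext ω
    by_cases hω : ω ∈ A <;> simp [hω] <;> linarith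

theorem quantile_abs_indicator_one (hA : MeasurableSet A) {u : ℝ} (hu0 : 0 < u) (hu1 : u ≤ 1) :
    quantile μ (fun ω => |A.indicator (fun _ => (1 : ℝ)) ω|) u =
      (Ioi (1 - μ.real A)).indicator 1 u := by
  have habs (ω : Ω) : |A.indicator (fun _ => (1 : ℝ)) ω| = A.indicator (fun _ => 1) ω :=
    abs_of_nonneg (indicator_nonneg (fun _ _ => zero_le_one) ω)
  have hset : {y : ℝ | u ≤ μ.real {ω | A.indicator (fun _ => (1 : ℝ)) ω ≤ y}} =
      Ici ((Ioi (1 - μ.real A)).indicator 1 u) := by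
    ext y
    simp only [mem_ofPred_eq, measureReal_indicator_one_le μ hA, mem_Ici, indicator_apply, mem_Ioi,
      Pi.one_apply]
    split_ifs <;> constructor <;> intro <;> linarith
  simp only [quantile, habs, ← measureReal_def]
  rw [hset, csInf_Ici]

theorem intervalIntegral_quantile_abs_indicator_one (hA : MeasurableSet A) {α : ℝ}
    (hα0 : 0 ≤ α) (hα1 : α ≤ 1) :
    ∫ u in α..1, quantile μ (fun ω => |A.indicator (fun _ => (1 : ℝ)) ω|) u =
      min (1 - α) (μ.real A) := by
  rw [intervalIntegral.integral_congr_ae (g := (Ioi (1 - μ.real A)).indicator 1)]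
  · rw [intervalIntegral.integral_of_le hα1, setIntegral_indicator measurableSet_Ioi,
      Ioc_inter_Ioi]
    have hq : 0 ≤ μ.real A := measureReal_nonneg
    simp only [Pi.one_apply, integral_const, MeasurableSet.univ, measureReal_restrict_apply,
      univ_inter, Real.volume_real_Ioc, smul_eq_mul, mul_one]
    grind
  · refine ae_of_all _ fun u hu => ?_
    rw [uIoc_of_le hα1] at hu
    exact quantile_abs_indicator_one μ hA (hα0.trans_lt hu.1) hu.2

theorem sigmaDualNorm_indicator_one (hA : MeasurableSet A) (σ : ℝ → ℝ) :
    sigmaDualNorm μ σ (A.indicator fun _ => 1) =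
      sInf {η : ℝ | 0 ≤ η ∧ ∀ α ∈ Ico (0 : ℝ) 1, min (1 - α) (μ.real A) ≤ η * ∫ u in α..1, σ u} := by
  unfold sigmaDualNorm
  congr 1
  ext η
  refine and_congr_right fun _ => forall₂_congr fun α ⟨hα0, hα1⟩ => ?_
  rw [avar, intervalIntegral_quantile_abs_indicator_one μ hA hα0 hα1.le, div_mul_eq_mul_div,
    inv_mul_eq_div, div_le_div_iff_of_pos_right (sub_pos.2 hα1)]

end Indicator

theorem stmt16_general {Ω : Type*} [MeasurableSpace Ω] (μ : Measure Ω) [IsProbabilityMeasure μ]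
    (σ : ℝ → ℝ) (hσ0 : ∀ u ∈ Set.Icc (0 : ℝ) 1, 0 ≤ σ u)
    (hσm : MonotoneOn σ (Set.Icc (0 : ℝ) 1))
    (hσ1 : (∫ u in (0 : ℝ)..1, σ u) = 1)
    (A : Set Ω) (hA : MeasurableSet A) :
    sigmaDualNorm μ σ (A.indicator fun _ => (1 : ℝ)) =
      (μ A).toReal / (∫ u in (1 - (μ A).toReal)..1, σ u) ∧
    (μ A).toReal ≤ sigmaDualNorm μ σ (A.indicator fun _ => (1 : ℝ)) ∧
    sigmaDualNorm μ σ (A.indicator fun _ => (1 : ℝ)) ≤ 1 := by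
  have hq0 : 0 ≤ μ.real A := measureReal_nonneg
  have hq1 : μ.real A ≤ 1 := measureReal_le_one
  rw [sigmaDualNorm_indicator_one μ hA, (isLeast_div_intervalIntegral hσ0 hσm hσ1 hq0 hq1).csInf_eq]
  exact ⟨rfl, div_intervalIntegral_mem_Icc hσ0 hσm hσ1 hq0 hq1⟩

/-- the dual norm of an indicator is
‖1_A‖_σ* = P(A)/∫_{1−P(A)}¹ σ(u)du, and P(A) ≤ ‖1_A‖_σ* ≤ 1. -/
theorem stmt16 {Ω : Type*} [MeasurableSpace Ω] (μ : Measure Ω) [IsProbabilityMeasure μ]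
    (σ : ℝ → ℝ) (hσ0 : ∀ u ∈ Set.Icc (0 : ℝ) 1, 0 ≤ σ u)
    (hσm : MonotoneOn σ (Set.Icc (0 : ℝ) 1)) (hσmeas : Measurable σ)
    (hσ1 : (∫ u in (0 : ℝ)..1, σ u) = 1)
    (A : Set Ω) (hA : MeasurableSet A) :
    sigmaDualNorm μ σ (A.indicator fun _ => (1 : ℝ)) =
      (μ A).toReal / (∫ u in (1 - (μ A).toReal)..1, σ u) ∧
    (μ A).toReal ≤ sigmaDualNorm μ σ (A.indicator fun _ => (1 : ℝ)) ∧
    sigmaDualNorm μ σ (A.indicator fun _ => (1 : ℝ)) ≤ 1 :=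
  stmt16_general μ σ hσ0 hσm hσ1 A hA
end

section
/- Let σ ∈ L^q([0,1]) be a spectral function (1 ≤ q ≤ ∞). Then for every Z with ‖Z‖_σ* < ∞, ‖Z‖_q ≤ ‖Z‖_σ* · ‖σ‖_q. Moreover if σ ∈ L^∞ then ‖Z‖_∞/‖σ‖_∞ ≤ ‖Z‖_σ* ≤ ‖Z‖_∞, so the dual space L_σ* equals L^∞ with equivalent norms. -/
open MeasureTheory ENNReal

/-!
Replace `|Z|` by its quantile function `G` on `(0,1)`: it has the law of `|Z|`, hence the same
`L^q` norms, and the definition of `η = ‖Z‖_σ*` says exactly that `∫_α^1 G ≤ ∫_α^1 η σ` for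
every `α`. As `G` is nondecreasing, this tail domination gives `∫ (G - s)⁺ ≤ ∫ (η σ - s)⁺` for
every level `s` (split `(0,1)` where `G` crosses `s`), and the representation
`t^p = p(p-1) ∫_0^∞ s^(p-2) (t - s)⁺ ds` turns this into `‖G‖_p ≤ ‖η σ‖_p`; for `p = ∞` use
`G(u)(1-u) ≤ ∫_u^1 G`. Conversely `‖Z‖_∞` is admissible in the infimum defining `‖Z‖_σ*`,
because `∫_α^1 σ ≥ 1 - α` for a nondecreasing `σ` of mean one.
-/

open Set Filter ProbabilityTheory

section Quantile

variable {Ω : Type*} [MeasurableSpace Ω] {μ : Measure Ω} [IsProbabilityMeasure μ] {X : Ω → ℝ}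

lemma quantile_eq_sInf_cdf (hX : AEMeasurable X μ) (p : ℝ) :
    quantile μ X p = sInf {y | p ≤ cdf (μ.map X) y} := by
  have := Measure.isProbabilityMeasure_map (μ := μ) hX
  simp_rw [cdf_eq_real, measureReal_def, Measure.map_apply_of_aemeasurable hX measurableSet_Iic]
  rfl

lemma csInf_le_iff_le_cdf (ν : Measure ℝ) [IsProbabilityMeasure ν] {p t : ℝ} (hp : p ∈ Ioo 0 1) :
    sInf {y | p ≤ cdf ν y} ≤ t ↔ p ≤ cdf ν t := by
  have hne : {y | p ≤ cdf ν y}.Nonempty :=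
    ((tendsto_cdf_atTop ν).eventually (eventually_ge_nhds hp.2)).exists
  obtain ⟨y₀, hy₀⟩ :=
    eventually_atBot.1 ((tendsto_cdf_atBot ν).eventually (eventually_lt_nhds hp.1))
  have hbdd : BddBelow {y | p ≤ cdf ν y} :=
    ⟨y₀, fun y hy => le_of_lt (not_le.1 fun h => (hy₀ y h).not_ge hy)⟩
  refine ⟨fun h => ?_, fun h => csInf_le hbdd h⟩
  refine ge_of_tendsto ((cdf ν).right_continuous t |>.mono Ioi_subset_Ici_self)
    (eventually_nhdsWithin_of_forall fun t' ht' => ?_)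
  obtain ⟨y, hy, hyt'⟩ := exists_lt_of_csInf_lt hne (h.trans_lt ht')
  exact hy.trans (monotone_cdf ν hyt'.le)

lemma quantile_le_iff_s18 (hX : AEMeasurable X μ) {p t : ℝ} (hp : p ∈ Ioo 0 1) :
    quantile μ X p ≤ t ↔ p ≤ cdf (μ.map X) t := by
  have := Measure.isProbabilityMeasure_map (μ := μ) hX
  rw [quantile_eq_sInf_cdf hX, csInf_le_iff_le_cdf _ hp]

lemma monotoneOn_quantile (hX : AEMeasurable X μ) : MonotoneOn (quantile μ X) (Ioo 0 1) :=
  fun _ ha _ hb hab => (quantile_le_iff_s18 hX ha).2 <| hab.trans <| (quantile_le_iff_s18 hX hb).1 le_rfl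

lemma aemeasurable_quantile (hX : AEMeasurable X μ) :
    AEMeasurable (quantile μ X) (volume.restrict (Ioo 0 1)) :=
  aemeasurable_restrict_of_monotoneOn measurableSet_Ioo (monotoneOn_quantile hX)

lemma volume_Ioo_inter_Iic {c : ℝ} (hc : c ∈ Icc (0 : ℝ) 1) :
    volume (Ioo 0 1 ∩ Iic c) = ENNReal.ofReal c := by
  rw [measure_congr (Ioo_ae_eq_Ioc.inter (ae_eq_refl (Iic c))), Ioc_inter_Iic,
    Real.volume_Ioc, sub_zero, min_eq_right hc.2]

lemma map_quantile (hX : AEMeasurable X μ) :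
    (volume.restrict (Ioo 0 1)).map (quantile μ X) = μ.map X := by
  have := Measure.isProbabilityMeasure_map (μ := μ) hX
  have : IsProbabilityMeasure (volume.restrict (Ioo (0 : ℝ) 1)) := ⟨by simp⟩
  have := Measure.isProbabilityMeasure_map (aemeasurable_quantile hX)
  refine Measure.ext_of_Iic _ _ fun t => ?_
  have hpre : quantile μ X ⁻¹' Iic t ∩ Ioo 0 1 = Ioo 0 1 ∩ Iic (cdf (μ.map X) t) := by
    ext p
    simp only [mem_inter_iff, mem_preimage, mem_Iic]
    exact ⟨fun h => ⟨h.2, (quantile_le_iff_s18 hX h.2).1 h.1⟩,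
      fun h => ⟨(quantile_le_iff_s18 hX h.1).2 h.2, h.1⟩⟩
  rw [Measure.map_apply_of_aemeasurable (aemeasurable_quantile hX) measurableSet_Iic,
    Measure.restrict_apply' measurableSet_Ioo, hpre,
    volume_Ioo_inter_Iic ⟨cdf_nonneg _ t, cdf_le_one _ t⟩, ofReal_cdf]

lemma eLpNorm_quantile (hX : AEMeasurable X μ) (q : ℝ≥0∞) :
    eLpNorm (quantile μ X) q (volume.restrict (Ioo 0 1)) = eLpNorm X q μ := by
  rw [← Function.id_comp (quantile μ X), ← eLpNorm_map_measure aestronglyMeasurable_id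
    (aemeasurable_quantile hX), map_quantile hX, eLpNorm_map_measure aestronglyMeasurable_id hX,
    Function.id_comp]

lemma integrableOn_quantile (hX : AEMeasurable X μ) (hXi : Integrable X μ) :
    IntegrableOn (quantile μ X) (Ioo 0 1) := by
  have h : Integrable id (μ.map X) :=
    (integrable_map_measure aestronglyMeasurable_id hX).2 hXi
  rwa [← map_quantile hX, integrable_map_measure aestronglyMeasurable_id
    (aemeasurable_quantile hX)] at h

lemma quantile_nonneg_ae (hX : AEMeasurable X μ) (hX0 : 0 ≤ᵐ[μ] X) :
    0 ≤ᵐ[volume.restrict (Ioo 0 1)] quantile μ X := by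
  have h : ∀ᵐ y ∂(μ.map X), 0 ≤ y := (ae_map_iff hX measurableSet_Ici).2 hX0
  rw [← map_quantile hX] at h
  exact ae_of_ae_map (aemeasurable_quantile hX) h

end Quantile

lemma integral_rpow_mul_sub {p t : ℝ} (hp : 1 < p) (ht : 0 ≤ t) :
    ∫ s in (0)..t, s ^ (p - 2) * (t - s) = t ^ p / (p * (p - 1)) := by
  have hsplit : ∀ s ∈ uIcc 0 t, s ^ (p - 2) * (t - s) = t * s ^ (p - 2) - s ^ (p - 1) := by
    intro s hs
    rw [uIcc_of_le ht] at hs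
    rw [show p - 1 = p - 2 + 1 by ring, Real.rpow_add_one' hs.1 (by linarith)]
    ring
  rw [intervalIntegral.integral_congr hsplit, intervalIntegral.integral_sub
    ((intervalIntegral.intervalIntegrable_rpow' (by linarith)).const_mul t)
    (intervalIntegral.intervalIntegrable_rpow' (by linarith)),
    intervalIntegral.integral_const_mul, integral_rpow (Or.inl (by linarith)),
    integral_rpow (Or.inl (by linarith)), show p - 2 + 1 = p - 1 by ring,
    show p - 1 + 1 = p by ring, Real.zero_rpow (by linarith), Real.zero_rpow (by linarith),
    sub_zero, sub_zero, ← mul_div_assoc, ← Real.rpow_one_add' ht (by linarith), add_sub_cancel]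
  have hp0 : p ≠ 0 := by linarith
  have hp1 : p - 1 ≠ 0 := by linarith
  field_simp
  ring

lemma ofReal_rpow_eq_lintegral {p : ℝ} (hp : 1 < p) (t : ℝ) :
    ENNReal.ofReal t ^ p = ENNReal.ofReal (p * (p - 1)) *
      ∫⁻ s in Ioi 0, ENNReal.ofReal (s ^ (p - 2)) * ENNReal.ofReal (t - s) := by
  rcases le_or_gt t 0 with ht | ht
  · have hzero : ∀ s ∈ Ioi (0 : ℝ),
        ENNReal.ofReal (s ^ (p - 2)) * ENNReal.ofReal (t - s) = 0 := fun s hs => by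
      rw [ENNReal.ofReal_of_nonpos (sub_nonpos.2 (ht.trans (mem_Ioi.1 hs).le)), mul_zero]
    rw [setLIntegral_congr_fun measurableSet_Ioi hzero, lintegral_zero, mul_zero,
      ENNReal.ofReal_of_nonpos ht, ENNReal.zero_rpow_of_pos (by linarith)]
  have hsupp : (Function.support fun s : ℝ =>
      ENNReal.ofReal (s ^ (p - 2)) * ENNReal.ofReal (t - s)) ⊆ Iio t :=
    Function.support_subset_iff'.2 fun s hs => by
      rw [ENNReal.ofReal_of_nonpos (sub_nonpos.2 (not_lt.1 (mt mem_Iio.2 hs))), mul_zero]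
  have hint : IntegrableOn (fun s => s ^ (p - 2) * (t - s)) (Ioo 0 t) :=
    (intervalIntegrable_iff_integrableOn_Ioo_of_le ht.le).1
      ((intervalIntegral.intervalIntegrable_rpow' (by linarith)).mul_continuousOn
        (continuousOn_const.sub continuousOn_id))
  have hcongr : ∀ s ∈ Ioo 0 t, ENNReal.ofReal (s ^ (p - 2)) * ENNReal.ofReal (t - s) =
      ENNReal.ofReal (s ^ (p - 2) * (t - s)) := fun s hs => by
    rw [ENNReal.ofReal_mul (Real.rpow_nonneg hs.1.le _)]
  rw [← setLIntegral_eq_of_support_subset hsupp, Measure.restrict_restrict measurableSet_Iio,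
    Iio_inter_Ioi, setLIntegral_congr_fun measurableSet_Ioo hcongr,
    ← ofReal_integral_eq_lintegral_ofReal hint ?_, ← integral_Ioc_eq_integral_Ioo,
    ← intervalIntegral.integral_of_le ht.le, integral_rpow_mul_sub hp ht.le,
    ENNReal.ofReal_rpow_of_nonneg ht.le (by linarith), ← ENNReal.ofReal_mul (by nlinarith)]
  · congr 1
    exact (mul_div_cancel₀ _ (_root_.mul_pos (by linarith) (by linarith)).ne').symm
  · filter_upwards [ae_restrict_mem measurableSet_Ioo] with s hs
    exact mul_nonneg (Real.rpow_nonneg hs.1.le _) (by linarith [hs.2])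

lemma lintegral_ofReal_rpow_eq {α : Type*} [MeasurableSpace α] {μ : Measure α} [SFinite μ]
    {p : ℝ} (hp : 1 < p) {K : α → ℝ} (hK : AEMeasurable K μ) :
    ∫⁻ x, ENNReal.ofReal (K x) ^ p ∂μ = ENNReal.ofReal (p * (p - 1)) *
      ∫⁻ s in Ioi 0, ENNReal.ofReal (s ^ (p - 2)) * ∫⁻ x, ENNReal.ofReal (K x - s) ∂μ := by
  have hmk : ∀ f : ℝ → ℝ≥0∞, ∫⁻ x, f (K x) ∂μ = ∫⁻ x, f (hK.mk K x) ∂μ := fun f =>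
    lintegral_congr_ae (hK.ae_eq_mk.fun_comp f)
  have hk := hK.measurable_mk
  have hmk_posPart : ∀ s, ∫⁻ x, ENNReal.ofReal (K x - s) ∂μ =
      ∫⁻ x, ENNReal.ofReal (hK.mk K x - s) ∂μ := fun s => hmk fun t => ENNReal.ofReal (t - s)
  simp_rw [hmk fun t => ENNReal.ofReal t ^ p, hmk_posPart,
    ofReal_rpow_eq_lintegral hp, lintegral_const_mul' _ _ ENNReal.ofReal_ne_top]
  rw [lintegral_lintegral_swap (by fun_prop)]
  congr 1
  refine lintegral_congr fun s => lintegral_const_mul _ (by fun_prop)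

lemma integral_max_sub_le_of_tail {G H : ℝ → ℝ} (hG : MonotoneOn G (Ioo 0 1))
    (hGi : IntegrableOn G (Ioo 0 1)) (hHi : IntegrableOn H (Ioo 0 1))
    (htail : ∀ α ∈ Ico (0 : ℝ) 1, ∫ u in Ioo α 1, G u ≤ ∫ u in Ioo α 1, H u) (s : ℝ) :
    ∫ u in Ioo 0 1, max (G u - s) 0 ≤ ∫ u in Ioo 0 1, max (H u - s) 0 := by
  set S := insert 0 {u ∈ Ioo (0 : ℝ) 1 | G u ≤ s}
  have hS : BddAbove S := ⟨1, by rintro u (rfl | ⟨hu, -⟩); exacts [zero_le_one, hu.2.le]⟩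
  -- `α` is the point where the nondecreasing `G` crosses the level `s`.
  set α := sSup S
  have hα0 : 0 ≤ α := le_csSup hS (mem_insert 0 _)
  have hα1 : α ≤ 1 := csSup_le (insert_nonempty _ _) <| by
    rintro u (rfl | ⟨hu, -⟩); exacts [zero_le_one, hu.2.le]
  have hsub : Ioo α 1 ⊆ Ioo 0 1 := Ioo_subset_Ioo_left hα0
  have hpos : ∀ᵐ u ∂volume.restrict (Ioo 0 1),
      max (G u - s) 0 = (Ioo α 1).indicator (fun u => G u - s) u := by
    filter_upwards [ae_restrict_mem measurableSet_Ioo, Measure.ae_ne _ α] with u hu huα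
    rcases huα.lt_or_gt with huα | huα
    · obtain ⟨v, hv, huv⟩ := exists_lt_of_lt_csSup (insert_nonempty _ _) huα
      rcases hv with rfl | ⟨hv, hGv⟩
      · exact absurd hu.1 huv.not_gt
      rw [indicator_of_notMem (fun h => huα.not_gt h.1), max_eq_right]
      linarith [hG hu hv huv.le]
    · have hGu : s < G u := not_le.1 fun h => huα.not_ge (le_csSup hS (Or.inr ⟨hu, h⟩))
      rw [indicator_of_mem (show u ∈ Ioo α 1 from ⟨huα, hu.2⟩), max_eq_left (by linarith)]
  have htail_sub : ∫ u in Ioo α 1, (G u - s) ≤ ∫ u in Ioo α 1, (H u - s) := by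
    have hc : IntegrableOn (fun _ => s) (Ioo α 1) := integrableOn_const (by simp)
    rw [integral_sub (hGi.mono_set hsub) hc, integral_sub (hHi.mono_set hsub) hc]
    rcases hα1.lt_or_eq with hα1 | hα1
    · linarith [htail α ⟨hα0, hα1⟩]
    · simp [hα1]
  have hHpos : IntegrableOn (fun u => max (H u - s) 0) (Ioo 0 1) :=
    (hHi.sub (integrableOn_const (by simp))).pos_part
  calc ∫ u in Ioo 0 1, max (G u - s) 0
      = ∫ u in Ioo α 1, (G u - s) := by
        rw [integral_congr_ae hpos, integral_indicator measurableSet_Ioo,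
          Measure.restrict_restrict measurableSet_Ioo, inter_eq_left.2 hsub]
    _ ≤ ∫ u in Ioo α 1, (H u - s) := htail_sub
    _ ≤ ∫ u in Ioo α 1, max (H u - s) 0 :=
        integral_mono ((hHi.mono_set hsub).sub (integrableOn_const (by simp)))
          (hHpos.mono_set hsub) fun u => le_max_left _ _
    _ ≤ ∫ u in Ioo 0 1, max (H u - s) 0 :=
        setIntegral_mono_set hHpos (ae_of_all _ fun u => le_max_right _ _) hsub.eventuallyLE

lemma lintegral_ofReal_rpow_le_of_tail {G H : ℝ → ℝ} (hG : MonotoneOn G (Ioo 0 1))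
    (hGi : IntegrableOn G (Ioo 0 1)) (hHi : IntegrableOn H (Ioo 0 1))
    (htail : ∀ α ∈ Ico (0 : ℝ) 1, ∫ u in Ioo α 1, G u ≤ ∫ u in Ioo α 1, H u)
    {p : ℝ} (hp : 1 ≤ p) :
    ∫⁻ u in Ioo 0 1, ENNReal.ofReal (G u) ^ p ≤ ∫⁻ u in Ioo 0 1, ENNReal.ofReal (H u) ^ p := by
  have hofReal : ∀ K : ℝ → ℝ, IntegrableOn K (Ioo 0 1) → ∀ s,
      ∫⁻ u in Ioo 0 1, ENNReal.ofReal (K u - s) =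
        ENNReal.ofReal (∫ u in Ioo 0 1, max (K u - s) 0) :=
    fun K hK s => by
      have hKs : IntegrableOn (fun u => max (K u - s) 0) (Ioo 0 1) :=
        (hK.sub (integrableOn_const (by simp))).pos_part
      rw [ofReal_integral_eq_lintegral_ofReal hKs (ae_of_all _ fun _ => le_max_right _ _)]
      simp
  have hlayer : ∀ s, ∫⁻ u in Ioo 0 1, ENNReal.ofReal (G u - s) ≤
      ∫⁻ u in Ioo 0 1, ENNReal.ofReal (H u - s) := fun s => by
    rw [hofReal G hGi, hofReal H hHi]
    exact ENNReal.ofReal_le_ofReal (integral_max_sub_le_of_tail hG hGi hHi htail s)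
  rcases hp.eq_or_lt with rfl | hp
  · simpa using hlayer 0
  rw [lintegral_ofReal_rpow_eq hp hGi.aemeasurable, lintegral_ofReal_rpow_eq hp hHi.aemeasurable]
  gcongr _ * ∫⁻ s in _, _ * ?_ with s
  exact hlayer s

lemma ae_le_toReal_eLpNorm_top {α : Type*} [MeasurableSpace α] {μ : Measure α} {f : α → ℝ}
    (hf : eLpNorm f ⊤ μ ≠ ⊤) : ∀ᵐ x ∂μ, f x ≤ (eLpNorm f ⊤ μ).toReal := by
  filter_upwards [enorm_ae_le_eLpNormEssSup f μ] with x hx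
  rw [← eLpNorm_exponent_top, Real.enorm_eq_ofReal_abs,
    ENNReal.ofReal_le_iff_le_toReal hf] at hx
  exact (le_abs_self _).trans hx

lemma eLpNorm_top_le_of_tail {G H : ℝ → ℝ} (hG : MonotoneOn G (Ioo 0 1))
    (hG0 : 0 ≤ᵐ[volume.restrict (Ioo 0 1)] G) (hGi : IntegrableOn G (Ioo 0 1))
    (hHi : IntegrableOn H (Ioo 0 1))
    (htail : ∀ α ∈ Ico (0 : ℝ) 1, ∫ u in Ioo α 1, G u ≤ ∫ u in Ioo α 1, H u) :
    eLpNorm G ⊤ (volume.restrict (Ioo 0 1)) ≤ eLpNorm H ⊤ (volume.restrict (Ioo 0 1)) := by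
  rcases eq_or_ne (eLpNorm H ⊤ (volume.restrict (Ioo 0 1))) ⊤ with hH | hH
  · rw [hH]
    exact le_top
  set M := (eLpNorm H ⊤ (volume.restrict (Ioo 0 1))).toReal
  have hHM := ae_le_toReal_eLpNorm_top hH
  have hGM : ∀ u ∈ Ioo (0 : ℝ) 1, G u ≤ M := fun u hu => by
    have hsub : Ioo u 1 ⊆ Ioo 0 1 := Ioo_subset_Ioo_left hu.1.le
    have h1u : 0 < 1 - u := by linarith [hu.2]
    have hconst : ∀ c : ℝ, ∫ _ in Ioo u 1, c = c * (1 - u) := fun c => by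
      simp [Real.volume_real_Ioo_of_le hu.2.le, mul_comm]
    have : G u * (1 - u) ≤ M * (1 - u) := calc
      G u * (1 - u) = ∫ _ in Ioo u 1, G u := (hconst _).symm
      _ ≤ ∫ v in Ioo u 1, G v := setIntegral_mono_on (integrableOn_const (by simp))
          (hGi.mono_set hsub) measurableSet_Ioo fun v hv => hG hu (hsub hv) hv.1.le
      _ ≤ ∫ v in Ioo u 1, H v := htail u ⟨hu.1.le, hu.2⟩
      _ ≤ ∫ _ in Ioo u 1, M := setIntegral_mono_ae_restrict (hHi.mono_set hsub)
          (integrableOn_const (by simp)) (ae_restrict_of_ae_restrict_of_subset hsub hHM)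
      _ = M * (1 - u) := hconst M
    exact le_of_mul_le_mul_right this h1u
  calc eLpNorm G ⊤ (volume.restrict (Ioo 0 1)) ≤ ENNReal.ofReal M := by
        rw [eLpNorm_exponent_top]
        refine eLpNormEssSup_le_of_ae_bound ?_
        filter_upwards [hG0, ae_restrict_mem measurableSet_Ioo] with u hu0 hu
        rw [Real.norm_of_nonneg hu0]
        exact hGM u hu
    _ = eLpNorm H ⊤ (volume.restrict (Ioo 0 1)) := ENNReal.ofReal_toReal hH

lemma eLpNorm_le_of_tail {G H : ℝ → ℝ} (hG : MonotoneOn G (Ioo 0 1))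
    (hG0 : 0 ≤ᵐ[volume.restrict (Ioo 0 1)] G) (hGi : IntegrableOn G (Ioo 0 1))
    (hHi : IntegrableOn H (Ioo 0 1))
    (htail : ∀ α ∈ Ico (0 : ℝ) 1, ∫ u in Ioo α 1, G u ≤ ∫ u in Ioo α 1, H u)
    {q : ℝ≥0∞} (hq : 1 ≤ q) :
    eLpNorm G q (volume.restrict (Ioo 0 1)) ≤ eLpNorm H q (volume.restrict (Ioo 0 1)) := by
  rcases eq_or_ne q ⊤ with rfl | hq_top
  · exact eLpNorm_top_le_of_tail hG hG0 hGi hHi htail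
  have hq0 : q ≠ 0 := (zero_lt_one.trans_le hq).ne'
  have hp : 1 ≤ q.toReal := by
    simpa using ENNReal.toReal_mono hq_top hq
  rw [eLpNorm_eq_lintegral_rpow_enorm_toReal hq0 hq_top,
    eLpNorm_eq_lintegral_rpow_enorm_toReal hq0 hq_top]
  gcongr ?_ ^ _
  calc ∫⁻ u in Ioo 0 1, ‖G u‖ₑ ^ q.toReal
      = ∫⁻ u in Ioo 0 1, ENNReal.ofReal (G u) ^ q.toReal :=
        lintegral_congr_ae (hG0.mono fun u hu => by simp only [Real.enorm_eq_ofReal hu])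
    _ ≤ ∫⁻ u in Ioo 0 1, ENNReal.ofReal (H u) ^ q.toReal :=
        lintegral_ofReal_rpow_le_of_tail hG hGi hHi htail hp
    _ ≤ ∫⁻ u in Ioo 0 1, ‖H u‖ₑ ^ q.toReal := by
        gcongr with u
        exact Real.ofReal_le_enorm _

lemma one_sub_mul_integral_le_integral_of_monotoneOn {σ : ℝ → ℝ}
    (hσm : MonotoneOn σ (Icc 0 1)) (hσi : IntervalIntegrable σ volume 0 1) {α : ℝ}
    (hα : α ∈ Icc (0 : ℝ) 1) : (1 - α) * ∫ u in (0)..1, σ u ≤ ∫ u in α..1, σ u := by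
  have hleft : IntervalIntegrable σ volume 0 α := hσi.mono_set (by
    rw [uIcc_of_le hα.1, uIcc_of_le zero_le_one]; exact Icc_subset_Icc_right hα.2)
  have hright : IntervalIntegrable σ volume α 1 := hσi.mono_set (by
    rw [uIcc_of_le hα.2, uIcc_of_le zero_le_one]; exact Icc_subset_Icc_left hα.1)
  have hle : ∫ u in (0)..α, σ u ≤ α * σ α := by
    simpa using intervalIntegral.integral_mono_on hα.1 hleft intervalIntegrable_const
      fun u hu => hσm ⟨hu.1, hu.2.trans hα.2⟩ hα hu.2
  have hge : (1 - α) * σ α ≤ ∫ u in α..1, σ u := by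
    simpa using intervalIntegral.integral_mono_on hα.2 intervalIntegrable_const hright
      fun u hu => hσm hα ⟨hα.1.trans hu.1, hu.2⟩ hu.1
  rw [← intervalIntegral.integral_add_adjacent_intervals hleft hright]
  nlinarith [mul_le_mul_of_nonneg_left hle (sub_nonneg.2 hα.2),
    mul_le_mul_of_nonneg_left hge hα.1]

section SigmaDualNorm

variable {Ω : Type*} [MeasurableSpace Ω] {μ : Measure Ω} {σ : ℝ → ℝ} {Z : Ω → ℝ}

lemma avar_le_iff {X : Ω → ℝ} {α : ℝ} (hα : α < 1) {η c : ℝ} :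
    avar μ X α ≤ η / (1 - α) * c ↔ ∫ u in α..1, quantile μ X u ≤ η * c := by
  rw [avar, inv_mul_eq_div, div_mul_eq_mul_div, div_le_div_iff_of_pos_right (by linarith)]

lemma sigmaDualNorm_nonneg : 0 ≤ sigmaDualNorm μ σ Z :=
  Real.sInf_nonneg fun _ hη => hη.1

lemma sigmaDualNorm_le {η : ℝ} (hη : 0 ≤ η) (h : ∀ α ∈ Ico (0 : ℝ) 1,
    ∫ u in α..1, quantile μ (fun ω => |Z ω|) u ≤ η * ∫ u in α..1, σ u) :
    sigmaDualNorm μ σ Z ≤ η :=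
  csInf_le ⟨0, fun _ hη => hη.1⟩ ⟨hη, fun α hα => (avar_le_iff hα.2).2 (h α hα)⟩

lemma integral_quantile_le_sigmaDualNorm_mul
    (hZfin : ∃ η : ℝ, 0 ≤ η ∧ ∀ α ∈ Ico (0 : ℝ) 1,
      avar μ (fun ω => |Z ω|) α ≤ η / (1 - α) * ∫ u in α..1, σ u)
    {α : ℝ} (hα : α ∈ Ico (0 : ℝ) 1) (hσα : 0 ≤ ∫ u in α..1, σ u) :
    ∫ u in α..1, quantile μ (fun ω => |Z ω|) u ≤ sigmaDualNorm μ σ Z * ∫ u in α..1, σ u := by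
  rw [mul_comm, sigmaDualNorm, ← smul_eq_mul, ← Real.sInf_smul_of_nonneg hσα]
  refine le_csInf (Set.Nonempty.smul_set hZfin) ?_
  rintro _ ⟨η, hη, rfl⟩
  show _ ≤ (∫ u in α..1, σ u) * η
  rw [mul_comm]
  exact (avar_le_iff hα.2).1 (hη.2 α hα)

variable [IsProbabilityMeasure μ]

lemma eLpNorm_quantile_abs (hZ : AEMeasurable Z μ) (q : ℝ≥0∞) :
    eLpNorm (quantile μ fun ω => |Z ω|) q (volume.restrict (Ioo 0 1)) = eLpNorm Z q μ := by
  have hW : AEMeasurable (fun ω => |Z ω|) μ := hZ.norm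
  rw [eLpNorm_quantile hW, ← eLpNorm_norm Z]
  rfl

theorem eLpNorm_le_ofReal_sigmaDualNorm_mul (hσi : IntegrableOn σ (Ioo 0 1))
    (hσ : ∀ α ∈ Ico (0 : ℝ) 1, 0 ≤ ∫ u in α..1, σ u) (hZm : AEMeasurable Z μ)
    (hZi : Integrable Z μ)
    (hZfin : ∃ η : ℝ, 0 ≤ η ∧ ∀ α ∈ Ico (0 : ℝ) 1,
      avar μ (fun ω => |Z ω|) α ≤ η / (1 - α) * ∫ u in α..1, σ u)
    {q : ℝ≥0∞} (hq : 1 ≤ q) :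
    eLpNorm Z q μ ≤
      ENNReal.ofReal (sigmaDualNorm μ σ Z) * eLpNorm σ q (volume.restrict (Ioo 0 1)) := by
  have hW : AEMeasurable (fun ω => |Z ω|) μ := hZm.norm
  have htail : ∀ α ∈ Ico (0 : ℝ) 1, ∫ u in Ioo α 1, quantile μ (fun ω => |Z ω|) u ≤
      ∫ u in Ioo α 1, sigmaDualNorm μ σ Z * σ u := fun α hα => by
    rw [integral_const_mul, ← integral_Ioc_eq_integral_Ioo, ← integral_Ioc_eq_integral_Ioo,
      ← intervalIntegral.integral_of_le hα.2.le, ← intervalIntegral.integral_of_le hα.2.le]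
    exact integral_quantile_le_sigmaDualNorm_mul hZfin hα (hσ α hα)
  calc eLpNorm Z q μ = eLpNorm (quantile μ fun ω => |Z ω|) q (volume.restrict (Ioo 0 1)) :=
        (eLpNorm_quantile_abs hZm q).symm
    _ ≤ eLpNorm (sigmaDualNorm μ σ Z • σ) q (volume.restrict (Ioo 0 1)) :=
        eLpNorm_le_of_tail (monotoneOn_quantile hW)
          (quantile_nonneg_ae hW (ae_of_all _ fun _ => abs_nonneg _))
          (integrableOn_quantile hW hZi.abs) (hσi.const_mul _) htail hq
    _ = ENNReal.ofReal (sigmaDualNorm μ σ Z) * eLpNorm σ q (volume.restrict (Ioo 0 1)) := by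
        rw [eLpNorm_const_smul, Real.enorm_eq_ofReal sigmaDualNorm_nonneg]

theorem ofReal_sigmaDualNorm_le_eLpNorm_top
    (hσ : ∀ α ∈ Ico (0 : ℝ) 1, 1 - α ≤ ∫ u in α..1, σ u) (hZm : AEMeasurable Z μ)
    (hZi : Integrable Z μ) :
    ENNReal.ofReal (sigmaDualNorm μ σ Z) ≤ eLpNorm Z ⊤ μ := by
  rcases eq_or_ne (eLpNorm Z ⊤ μ) ⊤ with h | h
  · rw [h]
    exact le_top
  rw [← ENNReal.ofReal_toReal h]
  refine ENNReal.ofReal_le_ofReal (sigmaDualNorm_le ENNReal.toReal_nonneg fun α hα => ?_)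
  have hW : AEMeasurable (fun ω => |Z ω|) μ := hZm.norm
  have hsub : Ioo α 1 ⊆ Ioo 0 1 := Ioo_subset_Ioo_left hα.1
  have hGM := ae_le_toReal_eLpNorm_top (f := quantile μ fun ω => |Z ω|)
    (by rwa [eLpNorm_quantile_abs hZm])
  rw [eLpNorm_quantile_abs hZm] at hGM
  calc ∫ u in α..1, quantile μ (fun ω => |Z ω|) u
      = ∫ u in Ioo α 1, quantile μ (fun ω => |Z ω|) u := by
        rw [intervalIntegral.integral_of_le hα.2.le, integral_Ioc_eq_integral_Ioo]
    _ ≤ ∫ _ in Ioo α 1, (eLpNorm Z ⊤ μ).toReal :=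
        setIntegral_mono_ae_restrict ((integrableOn_quantile hW hZi.abs).mono_set hsub)
          (integrableOn_const (by simp)) (ae_restrict_of_ae_restrict_of_subset hsub hGM)
    _ = (eLpNorm Z ⊤ μ).toReal * (1 - α) := by
        simp [Real.volume_real_Ioo_of_le hα.2.le, mul_comm]
    _ ≤ (eLpNorm Z ⊤ μ).toReal * ∫ u in α..1, σ u :=
        mul_le_mul_of_nonneg_left (hσ α hα) ENNReal.toReal_nonneg

end SigmaDualNorm

theorem stmt18_general {Ω : Type*} [MeasurableSpace Ω] (μ : Measure Ω) [IsProbabilityMeasure μ]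
    (σ : ℝ → ℝ)
    (hσm : MonotoneOn σ (Set.Icc (0 : ℝ) 1))
    (hσ1 : (∫ u in (0 : ℝ)..1, σ u) = 1)
    (q : ℝ≥0∞) (hq : 1 ≤ q)
    (Z : Ω → ℝ) (hZm : Measurable Z) (hZi : Integrable Z μ)
    (hZfin : ∃ η : ℝ, 0 ≤ η ∧ ∀ α ∈ Set.Ico (0 : ℝ) 1,
      avar μ (fun ω => |Z ω|) α ≤ η / (1 - α) * ∫ u in α..1, σ u) :
    eLpNorm Z q μ ≤ ENNReal.ofReal (sigmaDualNorm μ σ Z) *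
      eLpNorm σ q (volume.restrict (Set.Ioo (0 : ℝ) 1)) ∧
    (eLpNorm σ ⊤ (volume.restrict (Set.Ioo (0 : ℝ) 1)) < ⊤ →
      eLpNorm Z ⊤ μ ≤ ENNReal.ofReal (sigmaDualNorm μ σ Z) *
        eLpNorm σ ⊤ (volume.restrict (Set.Ioo (0 : ℝ) 1)) ∧
      ENNReal.ofReal (sigmaDualNorm μ σ Z) ≤ eLpNorm Z ⊤ μ) := by
  have hσi : IntervalIntegrable σ volume 0 1 := by
    by_contra h
    simp [intervalIntegral.integral_undef h] at hσ1
  have hσtail : ∀ α ∈ Ico (0 : ℝ) 1, 1 - α ≤ ∫ u in α..1, σ u := fun α hα => by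
    simpa [hσ1] using
      one_sub_mul_integral_le_integral_of_monotoneOn hσm hσi (Ico_subset_Icc_self hα)
  have hσtail_nonneg : ∀ α ∈ Ico (0 : ℝ) 1, 0 ≤ ∫ u in α..1, σ u := fun α hα =>
    (sub_nonneg.2 hα.2.le).trans (hσtail α hα)
  have hnorm : ∀ r : ℝ≥0∞, 1 ≤ r → eLpNorm Z r μ ≤
      ENNReal.ofReal (sigmaDualNorm μ σ Z) * eLpNorm σ r (volume.restrict (Ioo 0 1)) :=
    fun r hr => eLpNorm_le_ofReal_sigmaDualNorm_mul
      ((intervalIntegrable_iff_integrableOn_Ioo_of_le zero_le_one).1 hσi) hσtail_nonneg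
      hZm.aemeasurable hZi hZfin hr
  exact ⟨hnorm q hq, fun _ => ⟨hnorm ⊤ le_top,
    ofReal_sigmaDualNorm_le_eLpNorm_top hσtail hZm.aemeasurable hZi⟩⟩

/-- for a spectral function σ ∈ L^q (1 ≤ q ≤ ∞), ‖Z‖_q ≤ ‖Z‖_σ*·‖σ‖_q
whenever ‖Z‖_σ* < ∞; moreover if σ ∈ L^∞ then ‖Z‖_∞/‖σ‖_∞ ≤ ‖Z‖_σ* ≤ ‖Z‖_∞, so
L_σ* = L^∞ with equivalent norms. -/
theorem stmt18 {Ω : Type*} [MeasurableSpace Ω] (μ : Measure Ω) [IsProbabilityMeasure μ]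
    (σ : ℝ → ℝ) (hσ0 : ∀ u ∈ Set.Icc (0 : ℝ) 1, 0 ≤ σ u)
    (hσm : MonotoneOn σ (Set.Icc (0 : ℝ) 1)) (hσmeas : Measurable σ)
    (hσ1 : (∫ u in (0 : ℝ)..1, σ u) = 1)
    (q : ℝ≥0∞) (hq : 1 ≤ q)
    (Z : Ω → ℝ) (hZm : Measurable Z) (hZi : Integrable Z μ)
    (hZfin : ∃ η : ℝ, 0 ≤ η ∧ ∀ α ∈ Set.Ico (0 : ℝ) 1,
      avar μ (fun ω => |Z ω|) α ≤ η / (1 - α) * ∫ u in α..1, σ u) :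
    eLpNorm Z q μ ≤ ENNReal.ofReal (sigmaDualNorm μ σ Z) *
      eLpNorm σ q (volume.restrict (Set.Ioo (0 : ℝ) 1)) ∧
    (eLpNorm σ ⊤ (volume.restrict (Set.Ioo (0 : ℝ) 1)) < ⊤ →
      eLpNorm Z ⊤ μ ≤ ENNReal.ofReal (sigmaDualNorm μ σ Z) *
        eLpNorm σ ⊤ (volume.restrict (Set.Ioo (0 : ℝ) 1)) ∧
      ENNReal.ofReal (sigmaDualNorm μ σ Z) ≤ eLpNorm Z ⊤ μ) :=
  stmt18_general μ σ hσm hσ1 q hq Z hZm hZi hZfin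
end

section
/- Let L ⊆ L⁰([0,1], Borel, Lebesgue) be a vector space of random variables with L ⊋ L¹, closed under Y ↦ |Y|. Then there is no version-independent (law-invariant), real-valued risk measure on L satisfying monotonicity, convexity, positive homogeneity and translation equivariance. -/
/-!
Law invariance and subadditivity force `ρ` to dominate the expectation. For `0 ≤ X ≤ M` let `q`
be the quantile function of `X`, a monotone version of `X` on `(0, 1]`. The `N` rotations
`ω ↦ q (fract (ω + k / N))` all have the law of `X`, and at every `ω` their values are, up to
reindexing, bounded below by the left Riemann sum of `q`, so their sum is at least
`N E[X] - M`. Monotonicity, subadditivity and law invariance then give `N E[X] - M ≤ N ρ(X)`,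
hence `E[X] ≤ ρ(X)` as `N → ∞`. For a non-integrable `Y ∈ L` this bounds `E[min |Y| n]` by
`ρ(|Y|)` for all `n`, contradicting monotone convergence.
-/

open MeasureTheory ProbabilityTheory Set Filter Topology Finset Int

namespace LawInvariantRisk

/-- The quantile function of `ν`, clipped to `[0, M]`: allowing every `y ≥ M` keeps the defining
set nonempty, so the function is monotone and bounded on all of `ℝ`. -/
noncomputable def boundedQuantile (ν : Measure ℝ) (M t : ℝ) : ℝ :=
  sInf {y | 0 ≤ y ∧ (M ≤ y ∨ t ≤ cdf ν y)}

section BoundedQuantile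

variable {ν : Measure ℝ} {M t y : ℝ}

lemma boundedQuantile_set_bddBelow (t : ℝ) :
    BddBelow {y | 0 ≤ y ∧ (M ≤ y ∨ t ≤ cdf ν y)} :=
  ⟨0, fun _ hy => hy.1⟩

lemma max_mem_boundedQuantile_set (t : ℝ) :
    max M 0 ∈ {y | 0 ≤ y ∧ (M ≤ y ∨ t ≤ cdf ν y)} :=
  ⟨le_max_right _ _, Or.inl (le_max_left _ _)⟩

lemma boundedQuantile_nonneg (t : ℝ) : 0 ≤ boundedQuantile ν M t :=
  Real.sInf_nonneg fun _ hy => hy.1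

lemma boundedQuantile_le_max (t : ℝ) : boundedQuantile ν M t ≤ max M 0 :=
  csInf_le (boundedQuantile_set_bddBelow t) (max_mem_boundedQuantile_set t)

lemma monotone_boundedQuantile : Monotone (boundedQuantile ν M) := by
  intro s t hst
  refine csInf_le_csInf (boundedQuantile_set_bddBelow s) ⟨_, max_mem_boundedQuantile_set t⟩ ?_
  rintro y ⟨hy0, hy⟩
  exact ⟨hy0, hy.imp_right hst.trans⟩

lemma boundedQuantile_le_iff (hy0 : 0 ≤ y) (hyM : y < M) :
    boundedQuantile ν M t ≤ y ↔ t ≤ cdf ν y := by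
  refine ⟨fun h => ?_, fun h => csInf_le (boundedQuantile_set_bddBelow t) ⟨hy0, Or.inr h⟩⟩
  have hclose : ∀ᶠ z in 𝓝[>] y, t ≤ cdf ν z := by
    filter_upwards [Ioo_mem_nhdsGT hyM] with z ⟨hyz, hzM⟩
    obtain ⟨s, ⟨-, hs⟩, hsz⟩ := exists_lt_of_csInf_lt ⟨_, max_mem_boundedQuantile_set t⟩
      (h.trans_lt hyz)
    exact (hs.resolve_left (by linarith)).trans (monotone_cdf ν hsz.le)
  exact ge_of_tendsto ((cdf ν).right_continuous y |>.mono Ioi_subset_Ici_self) hclose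

lemma map_boundedQuantile [IsProbabilityMeasure ν] (hν : ∀ᵐ x ∂ν, x ∈ Icc 0 M) :
    (volume.restrict (Ioc 0 1)).map (boundedQuantile ν M) = ν := by
  have hmeas := monotone_boundedQuantile (ν := ν) (M := M).measurable
  refine Measure.ext_of_Iic _ _ fun y => ?_
  rw [Measure.map_apply hmeas measurableSet_Iic, Measure.restrict_apply (hmeas measurableSet_Iic)]
  rcases lt_or_ge y 0 with hy0 | hy0
  · have hq : boundedQuantile ν M ⁻¹' Iic y = ∅ :=
      eq_empty_of_forall_notMem fun t ht => (boundedQuantile_nonneg t).not_gt (ht.trans_lt hy0)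
    have hν0 : ν (Iic y) = 0 :=
      measure_mono_null (fun x (hx : x ≤ y) (hxM : x ∈ Icc 0 M) => (hxM.1.trans hx).not_gt hy0)
        (ae_iff.1 hν)
    rw [hq, empty_inter, measure_empty, hν0]
  rcases lt_or_ge y M with hyM | hyM
  · have hq : boundedQuantile ν M ⁻¹' Iic y ∩ Ioc 0 1 = Ioc 0 (cdf ν y) := by
      rw [← Iic_inter_Ioc_of_le (cdf_le_one ν y)]
      ext t
      simp [boundedQuantile_le_iff hy0 hyM]
    rw [hq, Real.volume_Ioc, sub_zero, ofReal_cdf]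
  · have hq : boundedQuantile ν M ⁻¹' Iic y = univ :=
      eq_univ_of_forall fun t => (boundedQuantile_le_max t).trans (max_le hyM hy0)
    have hν1 : ν (Iic y) = 1 := prob_compl_eq_zero_iff measurableSet_Iic |>.1 <|
      measure_mono_null (fun x (hx : ¬x ≤ y) (hxM : x ∈ Icc 0 M) => hx (hxM.2.trans hyM))
        (ae_iff.1 hν)
    rw [hq, univ_inter, Real.volume_Ioc, sub_zero, ENNReal.ofReal_one, hν1]

end BoundedQuantile

section Periodic

variable {α : Type*} [MeasurableSpace α] {f : ℝ → α} {T : ℝ}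

lemma _root_.Function.Periodic.map_restrict_Ioc_eq (hf : Function.Periodic f T) (hT : 0 < T)
    (hfm : Measurable f) (a b : ℝ) :
    (volume.restrict (Ioc a (a + T))).map f = (volume.restrict (Ioc b (b + T))).map f := by
  ext s hs
  rw [Measure.map_apply hfm hs, Measure.map_apply hfm hs, Measure.restrict_apply (hfm hs),
    Measure.restrict_apply (hfm hs)]
  refine (isAddFundamentalDomain_Ioc' hT a).measure_set_eq (isAddFundamentalDomain_Ioc' hT b)
    (hfm hs) fun ⟨g, hg⟩ => ?_
  obtain ⟨n, hn⟩ := AddSubgroup.mem_zmultiples_iff.1 (AddSubgroup.mem_op.1 hg)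
  ext x
  simp [← hn, hf.int_mul n x]

lemma _root_.Function.Periodic.map_comp_add_right (hf : Function.Periodic f T) (hT : 0 < T)
    (hfm : Measurable f) (a c : ℝ) :
    (volume.restrict (Ioc a (a + T))).map (fun x => f (x + c)) =
      (volume.restrict (Ioc a (a + T))).map f := by
  have htrans : (volume.restrict (Ioc a (a + T))).map (· + c) =
      volume.restrict (Ioc (a + c) (a + c + T)) := by
    conv_rhs => rw [← (measurePreserving_add_right volume c).map_eq,
      Measure.restrict_map (measurable_add_const c) measurableSet_Ioc, preimage_add_const_Ioc]
    ring_nf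
  rw [show (fun x => f (x + c)) = f ∘ (· + c) from rfl,
    ← Measure.map_map hfm (measurable_add_const c), htrans, hf.map_restrict_Ioc_eq hT hfm]

end Periodic

lemma map_boundedQuantile_fract_add {ν : Measure ℝ} [IsProbabilityMeasure ν] {M : ℝ}
    (hν : ∀ᵐ x ∂ν, x ∈ Icc 0 M) (c : ℝ) :
    (volume.restrict (Ioc 0 1)).map (fun ω => boundedQuantile ν M (fract (ω + c))) = ν := by
  have hmeas := monotone_boundedQuantile (ν := ν) (M := M).measurable
  have hperiodic : Function.Periodic (fun x => boundedQuantile ν M (fract x)) 1 :=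
    fun x => by simp only [fract_add_one]
  have h := hperiodic.map_comp_add_right one_pos (hmeas.comp measurable_fract) 0 c
  rw [zero_add] at h
  rw [h]
  conv_rhs => rw [← map_boundedQuantile hν]
  refine Measure.map_congr ?_
  rw [Measure.restrict_congr_set Ioo_ae_eq_Ioc.symm]
  filter_upwards [ae_restrict_mem measurableSet_Ioo] with x hx
  rw [fract_eq_self.2 ⟨hx.1.le, hx.2⟩]

section RiemannSums

lemma _root_.Function.Periodic.sum_range_add {M : Type*} [AddCancelCommMonoid M] {h : ℕ → M}
    {N : ℕ} (hh : Function.Periodic h N) (i : ℕ) :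
    ∑ k ∈ range N, h (i + k) = ∑ k ∈ range N, h k := by
  induction i with
  | zero => simp
  | succ i ih =>
    have hshift := sum_range_succ' (fun k => h (i + k)) N
    rw [sum_range_succ, add_zero, hh i] at hshift
    simp only [show ∀ k, i + 1 + k = i + (k + 1) from fun k => by omega]
    rw [← ih, add_right_cancel hshift]

lemma fract_natFloor_div_le {y : ℝ} (hy : 0 ≤ y) (N : ℕ) :
    fract ((⌊y⌋₊ : ℝ) / N) ≤ fract (y / N) := by
  rw [natCast_floor_eq_intCast_floor hy, Int.fract, Int.fract, floor_div_natCast,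
    floor_div_natCast, floor_intCast, sub_le_sub_iff_right]
  exact div_le_div_of_nonneg_right (floor_le y) N.cast_nonneg

variable {f : ℝ → ℝ}

lemma _root_.MonotoneOn.mul_integral_le_sum (hf : MonotoneOn f (Icc 0 1)) (N : ℕ) :
    N * ∫ x in (0 : ℝ)..1, f x ≤ ∑ i ∈ range N, f (i / N) + (f 1 - f 0) := by
  rcases N.eq_zero_or_pos with rfl | hN
  · simpa using hf ⟨le_rfl, zero_le_one⟩ ⟨zero_le_one, le_rfl⟩ zero_le_one
  have hN' : (N : ℝ) ≠ 0 := by positivity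
  have hscaled : MonotoneOn (fun x => f (x / N)) (Icc 0 (0 + N)) := by
    have hmaps : ∀ x ∈ Icc (0 : ℝ) (0 + N), x / N ∈ Icc (0 : ℝ) 1 := fun x hx =>
      ⟨div_nonneg hx.1 N.cast_nonneg, (div_le_one (by positivity)).2 (by simpa using hx.2)⟩
    exact fun x hx y hy hxy =>
      hf (hmaps x hx) (hmaps y hy) (div_le_div_of_nonneg_right hxy N.cast_nonneg)
  have hshift := sum_range_succ' (fun i => f (i / N)) N
  rw [sum_range_succ] at hshift
  calc (N : ℝ) * ∫ x in (0 : ℝ)..1, f x = ∫ x in (0 : ℝ)..0 + N, f (x / N) := by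
        rw [intervalIntegral.integral_comp_div f hN', zero_div, zero_add, div_self hN',
          smul_eq_mul]
    _ ≤ ∑ i ∈ range N, f ((0 + ((i + 1 : ℕ) : ℝ)) / N) := hscaled.integral_le_sum
    _ = ∑ i ∈ range N, f (i / N) + (f 1 - f 0) := by
        simp only [zero_add, Nat.cast_zero, zero_div, div_self hN'] at hshift ⊢
        linarith

lemma _root_.MonotoneOn.sum_le_sum_fract_add (hf : MonotoneOn f (Ico 0 1)) {N : ℕ} (hN : 0 < N)
    (ω : ℝ) : ∑ i ∈ range N, f (i / N) ≤ ∑ k ∈ range N, f (fract (ω + k / N)) := by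
  have hN' : (N : ℝ) ≠ 0 := by positivity
  set i₀ := ⌊fract ω * N⌋₊
  have hperiodic : Function.Periodic (fun m : ℕ => f (fract ((m : ℝ) / N))) N := fun m => by
    simp only [Nat.cast_add, add_div, div_self hN', fract_add_one]
  have hmem : ∀ x, fract x ∈ Ico (0 : ℝ) 1 := fun x => ⟨fract_nonneg x, fract_lt_one x⟩
  calc ∑ i ∈ range N, f (i / N) = ∑ k ∈ range N, f (fract (((i₀ + k : ℕ) : ℝ) / N)) := by
        rw [hperiodic.sum_range_add]
        refine sum_congr rfl fun i hi => ?_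
        rw [fract_eq_self.2 ⟨by positivity,
          (div_lt_one (by positivity)).2 (by exact_mod_cast mem_range.1 hi)⟩]
    _ ≤ ∑ k ∈ range N, f (fract (ω + k / N)) := by
        refine sum_le_sum fun k _ => hf (hmem _) (hmem _) ?_
        have key := fract_natFloor_div_le (by positivity : 0 ≤ fract ω * N + k) N
        have hfract : fract (fract ω + k / N) = fract (ω + k / N) := by
          rw [← self_sub_floor ω, sub_add_eq_add_sub, fract_sub_intCast]
        rwa [Nat.floor_add_natCast (by positivity), add_div, mul_div_cancel_right₀ _ hN',
          hfract] at key

end RiemannSums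

theorem exists_rearrangements_sum_ge {X : ℝ → ℝ} {M : ℝ} (hX : Measurable X)
    (hXM : ∀ ω, X ω ∈ Icc 0 M) {N : ℕ} (hN : 0 < N) :
    ∃ g : ℕ → ℝ → ℝ, (∀ k, Measurable (g k) ∧ (∀ ω, g k ω ∈ Icc 0 M) ∧
        (volume.restrict (Ioc 0 1)).map (g k) = (volume.restrict (Ioc 0 1)).map X) ∧
      ∀ ω, N * ∫ ω, X ω ∂(volume.restrict (Ioc 0 1)) - M ≤ ∑ k ∈ range N, g k ω := by
  set ν := (volume.restrict (Ioc (0 : ℝ) 1)).map X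
  have : IsProbabilityMeasure (volume.restrict (Ioc (0 : ℝ) 1)) := ⟨by simp⟩
  have : IsProbabilityMeasure ν := Measure.isProbabilityMeasure_map hX.aemeasurable
  have hν : ∀ᵐ x ∂ν, x ∈ Icc 0 M :=
    (ae_map_iff hX.aemeasurable measurableSet_Icc).2 (ae_of_all _ hXM)
  set q := boundedQuantile ν M
  have hq : Monotone q := monotone_boundedQuantile
  have hqM : ∀ t, q t ∈ Icc 0 M := fun t => ⟨boundedQuantile_nonneg t,
    (boundedQuantile_le_max t).trans_eq (max_eq_left ((hXM 0).1.trans (hXM 0).2))⟩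
  have hintegral : ∫ ω, X ω ∂(volume.restrict (Ioc 0 1)) = ∫ x in (0 : ℝ)..1, q x := by
    have hX_law : ∫ x, x ∂ν = ∫ ω, X ω ∂(volume.restrict (Ioc 0 1)) :=
      integral_map hX.aemeasurable aestronglyMeasurable_id
    have hq_law : ∫ x, x ∂ν = ∫ t, q t ∂(volume.restrict (Ioc 0 1)) := by
      conv_lhs => rw [← map_boundedQuantile hν]
      exact integral_map hq.measurable.aemeasurable aestronglyMeasurable_id
    rw [intervalIntegral.integral_of_le zero_le_one, ← hX_law, hq_law]
  refine ⟨fun k ω => q (fract (ω + k / N)), fun k => ⟨?_, fun ω => hqM _,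
    map_boundedQuantile_fract_add hν _⟩, fun ω => ?_⟩
  · exact hq.measurable.comp (measurable_add_const _).fract
  calc N * ∫ ω, X ω ∂(volume.restrict (Ioc 0 1)) - M
      ≤ ∑ i ∈ range N, q (i / N) + (q 1 - q 0) - M := by
        rw [hintegral]
        exact sub_le_sub_right (hq.monotoneOn _ |>.mul_integral_le_sum N) M
    _ ≤ ∑ i ∈ range N, q (i / N) := by linarith [(hqM 1).2, (hqM 0).1]
    _ ≤ ∑ k ∈ range N, q (fract (ω + k / N)) := (hq.monotoneOn _).sum_le_sum_fract_add hN ω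

lemma integrable_of_integral_min_le {Ω : Type*} [MeasurableSpace Ω] {μ : Measure Ω}
    [IsFiniteMeasure μ] {Z : Ω → ℝ} (hZ : Measurable Z) (hZ0 : ∀ ω, 0 ≤ Z ω) {C : ℝ}
    (hC : ∀ n : ℕ, ∫ ω, min (Z ω) n ∂μ ≤ C) : Integrable Z μ := by
  have hmin : ∀ n : ℕ, Integrable (fun ω => min (Z ω) n) μ := fun n =>
    Integrable.of_mem_Icc 0 n (hZ.min measurable_const).aemeasurable
      (ae_of_all _ fun ω => ⟨le_min (hZ0 ω) n.cast_nonneg, min_le_right _ _⟩)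
  have hsup : ∀ ω, ENNReal.ofReal (Z ω) = ⨆ n : ℕ, ENNReal.ofReal (min (Z ω) n) := fun ω =>
    le_antisymm (le_iSup_of_le ⌈Z ω⌉₊ (by rw [min_eq_left (Nat.le_ceil _)]))
      (iSup_le fun n => ENNReal.ofReal_le_ofReal (min_le_left _ _))
  refine ⟨hZ.aestronglyMeasurable, (hasFiniteIntegral_iff_ofReal (ae_of_all _ hZ0)).2 ?_⟩
  calc ∫⁻ ω, ENNReal.ofReal (Z ω) ∂μ = ⨆ n : ℕ, ∫⁻ ω, ENNReal.ofReal (min (Z ω) n) ∂μ := by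
        simp_rw [hsup]
        refine lintegral_iSup (fun n => (hZ.min measurable_const).ennreal_ofReal) ?_
        exact fun m n hmn ω => ENNReal.ofReal_le_ofReal (min_le_min le_rfl (by exact_mod_cast hmn))
    _ ≤ ENNReal.ofReal C := iSup_le fun n => by
        rw [← ofReal_integral_eq_lintegral_ofReal (hmin n)
          (ae_of_all _ fun ω => le_min (hZ0 ω) n.cast_nonneg)]
        exact ENNReal.ofReal_le_ofReal (hC n)
    _ < ⊤ := ENNReal.ofReal_lt_top

section RiskMeasure

variable {L : Submodule ℝ (ℝ → ℝ)} {ρ : (ℝ → ℝ) → ℝ}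

lemma mem_of_measurable_of_mem_Icc
    (hL1 : ∀ Y : ℝ → ℝ, Measurable Y → Integrable Y (volume.restrict (Ioc 0 1)) → Y ∈ L)
    {X : ℝ → ℝ} {M : ℝ} (hX : Measurable X) (hXM : ∀ ω, X ω ∈ Icc 0 M) : X ∈ L :=
  hL1 X hX (Integrable.of_mem_Icc 0 M hX.aemeasurable (ae_of_all _ hXM))

lemma map_add_le_of_convex_of_posHomogeneous
    (hpos : ∀ Y ∈ L, ∀ c : ℝ, 0 < c → ρ (c • Y) = c * ρ Y)
    (hconv : ∀ Y₀ ∈ L, ∀ Y₁ ∈ L, ∀ t : ℝ, 0 ≤ t → t ≤ 1 →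
      ρ ((1 - t) • Y₀ + t • Y₁) ≤ (1 - t) * ρ Y₀ + t * ρ Y₁) :
    ∀ Y₁ ∈ L, ∀ Y₂ ∈ L, ρ (Y₁ + Y₂) ≤ ρ Y₁ + ρ Y₂ := by
  intro Y₁ hY₁ Y₂ hY₂
  have hmid := hconv Y₁ hY₁ Y₂ hY₂ (1 / 2) (by norm_num) (by norm_num)
  rw [show (1 - 1 / 2 : ℝ) = 1 / 2 by norm_num, ← smul_add,
    hpos _ (L.add_mem hY₁ hY₂) _ (by norm_num)] at hmid
  linarith

lemma map_const_of_posHomogeneous (hpos : ∀ Y ∈ L, ∀ c : ℝ, 0 < c → ρ (c • Y) = c * ρ Y)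
    (htrans : ∀ Y ∈ L, ∀ c : ℝ, ρ (fun ω => Y ω + c) = ρ Y + c) (c : ℝ) :
    ρ (fun _ => c) = c := by
  have hzero : ρ 0 = 0 := by
    have h := hpos 0 L.zero_mem 2 two_pos
    rw [smul_zero] at h
    linarith
  simpa [hzero] using htrans 0 L.zero_mem c

theorem integral_le_of_lawInvariant
    (hmono : ∀ Y₁ ∈ L, ∀ Y₂ ∈ L,
      (∀ᵐ ω ∂(volume.restrict (Ioc 0 1)), Y₁ ω ≤ Y₂ ω) → ρ Y₁ ≤ ρ Y₂)
    (hsub : ∀ Y₁ ∈ L, ∀ Y₂ ∈ L, ρ (Y₁ + Y₂) ≤ ρ Y₁ + ρ Y₂)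
    (hconst : ∀ c : ℝ, ρ (fun _ => c) = c)
    (hlaw : ∀ Y₁ ∈ L, ∀ Y₂ ∈ L, (∀ y : ℝ, volume.restrict (Ioc 0 1) {ω | Y₁ ω ≤ y} =
      volume.restrict (Ioc 0 1) {ω | Y₂ ω ≤ y}) → ρ Y₁ = ρ Y₂)
    (hL1 : ∀ Y : ℝ → ℝ, Measurable Y → Integrable Y (volume.restrict (Ioc 0 1)) → Y ∈ L)
    {X : ℝ → ℝ} {M : ℝ} (hX : Measurable X) (hXM : ∀ ω, X ω ∈ Icc 0 M) :
    ∫ ω, X ω ∂(volume.restrict (Ioc 0 1)) ≤ ρ X := by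
  have hXL := mem_of_measurable_of_mem_Icc hL1 hX hXM
  have key : ∀ N : ℕ, 0 < N →
      N * ∫ ω, X ω ∂(volume.restrict (Ioc 0 1)) - M ≤ N * ρ X := by
    intro N hN
    obtain ⟨g, hg, hsum⟩ := exists_rearrangements_sum_ge hX hXM hN
    have hgL : ∀ k, g k ∈ L := fun k => mem_of_measurable_of_mem_Icc hL1 (hg k).1 (hg k).2.1
    have hρg : ∀ k, ρ (g k) = ρ X := fun k => hlaw _ (hgL k) _ hXL fun y => by
      have h := congrArg (fun ν : Measure ℝ => ν (Iic y)) (hg k).2.2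
      rwa [Measure.map_apply (hg k).1 measurableSet_Iic,
        Measure.map_apply hX measurableSet_Iic] at h
    calc N * ∫ ω, X ω ∂(volume.restrict (Ioc 0 1)) - M
        = ρ (fun _ => N * ∫ ω, X ω ∂(volume.restrict (Ioc 0 1)) - M) := (hconst _).symm
      _ ≤ ρ (∑ k ∈ range N, g k) :=
          hmono _ (hL1 _ measurable_const (integrable_const _)) _ (sum_mem fun k _ => hgL k)
            (ae_of_all _ fun ω => by simpa only [Finset.sum_apply] using hsum ω)
      _ ≤ ∑ k ∈ range N, ρ (g k) :=
          le_sum_of_subadditive_on_pred ρ (· ∈ L) (hconst 0).le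
            (fun Y₁ Y₂ h₁ h₂ => hsub Y₁ h₁ Y₂ h₂) (fun _ _ => L.add_mem) g
            fun k _ => hgL k
      _ = N * ρ X := by simp [hρg]
  refine ge_of_tendsto (tendsto_const_nhds.add (tendsto_const_div_atTop_nhds_zero_nat M))
    ?_ |>.trans_eq (add_zero _)
  filter_upwards [eventually_gt_atTop 0] with N hN
  have hN' : (0 : ℝ) < N := by exact_mod_cast hN
  rw [← sub_le_iff_le_add', le_div_iff₀ hN']
  linarith [key N hN]

end RiskMeasure

end LawInvariantRisk

open LawInvariantRisk

/-- on the standard probability space [0,1] with Lebesgue measure, there is no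
version-independent (law-invariant), real-valued risk measure — monotone, convex, positively
homogeneous and translation equivariant — on a vector space L of random variables that
strictly contains L¹ and is closed under absolute value. -/
theorem stmt19 (L : Submodule ℝ (ℝ → ℝ))
    (μ : Measure ℝ) (hμ : μ = volume.restrict (Set.Icc (0 : ℝ) 1))
    (hmeas : ∀ Y ∈ L, Measurable Y)
    (habs : ∀ Y ∈ L, (fun ω => |Y ω|) ∈ L)
    (hL1 : ∀ Y : ℝ → ℝ, Measurable Y → Integrable Y μ → Y ∈ L)
    (hstrict : ∃ Y ∈ L, ¬ Integrable Y μ) :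
    ¬ ∃ ρ : (ℝ → ℝ) → ℝ,
      (∀ Y₁ ∈ L, ∀ Y₂ ∈ L, (∀ᵐ ω ∂μ, Y₁ ω ≤ Y₂ ω) → ρ Y₁ ≤ ρ Y₂) ∧
      (∀ Y ∈ L, ∀ c : ℝ, 0 < c → ρ (c • Y) = c * ρ Y) ∧
      (∀ Y₀ ∈ L, ∀ Y₁ ∈ L, ∀ t : ℝ, 0 ≤ t → t ≤ 1 →
        ρ ((1 - t) • Y₀ + t • Y₁) ≤ (1 - t) * ρ Y₀ + t * ρ Y₁) ∧
      (∀ Y ∈ L, ∀ c : ℝ, ρ (fun ω => Y ω + c) = ρ Y + c) ∧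
      (∀ Y₁ ∈ L, ∀ Y₂ ∈ L,
        (∀ y : ℝ, μ {ω | Y₁ ω ≤ y} = μ {ω | Y₂ ω ≤ y}) → ρ Y₁ = ρ Y₂) := by
  rintro ⟨ρ, hmono, hpos, hconv, htrans, hlaw⟩
  obtain ⟨Y, hYL, hY⟩ := hstrict
  obtain rfl : μ = volume.restrict (Ioc 0 1) :=
    hμ.trans (Measure.restrict_congr_set Ioc_ae_eq_Icc).symm
  have hYm := hmeas Y hYL
  refine hY ((integrable_norm_iff hYm.aestronglyMeasurable).1 <|
    integrable_of_integral_min_le (C := ρ fun ω => |Y ω|) hYm.norm (fun ω => norm_nonneg _)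
      fun n => ?_)
  have hmin : Measurable fun ω => min |Y ω| n := hYm.abs.min measurable_const
  have hminIcc : ∀ ω, min |Y ω| n ∈ Icc 0 (n : ℝ) := fun ω =>
    ⟨le_min (abs_nonneg _) n.cast_nonneg, min_le_right _ _⟩
  calc ∫ ω, min ‖Y ω‖ n ∂volume.restrict (Ioc 0 1) ≤ ρ fun ω => min |Y ω| n :=
        integral_le_of_lawInvariant hmono (map_add_le_of_convex_of_posHomogeneous hpos hconv)
          (map_const_of_posHomogeneous hpos htrans) hlaw hL1 hmin hminIcc
    _ ≤ ρ fun ω => |Y ω| :=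
        hmono _ (mem_of_measurable_of_mem_Icc hL1 hmin hminIcc) _ (habs Y hYL)
          (ae_of_all _ fun ω => min_le_left _ _)
end
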